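/- arXiv:1310.2438 — 6 statements merged into one kernel-verified Lean document; each statement's English description precedes it below -/
import Mathlib

section
/- Let p be a polynomial of degree at most m and q a polynomial of degree at most n. If either p and q have a common root, or simultaneously the coefficient of z^m in p and the coefficient of z^n in q vanish, then the (m+n+1)×(m+n+2) Sylvester-like matrix S = S(q,-p) (whose first n+1 columns are the shifted coefficient vectors of q and whose last m+1 columns are the shifted coefficient vectors of -p, extended by one row beyond the classical Sylvester matrix) does not have full row rank m+n+1. -/
noncomputable section
open Matrix Finset Polynomial

/-- Spectral (operator `ℓ² → ℓ²`) norm of a complex matrix. -/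
def specNorm {α β : Type} [Fintype α] [Fintype β] [DecidableEq α] [DecidableEq β]
    (A : Matrix α β ℂ) : ℝ :=
  ‖(Matrix.toEuclideanLin A).toContinuousLinearMap‖

/-- Moore–Penrose pseudoinverse `A† = Aᴴ (A Aᴴ)⁻¹` of a full row rank matrix. -/
def pinv {α β : Type} [Fintype α] [Fintype β] [DecidableEq α] [DecidableEq β]
    (A : Matrix α β ℂ) : Matrix β α ℂ :=
  Aᴴ * (A * Aᴴ)⁻¹

/-- Sylvester-like matrix `S = S(q,-p)` of size `(m+n+1) × (m+n+2)`: for `0 ≤ k ≤ m` the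
`(j,k)` entry is `q_{j-k}`, and for `0 ≤ k ≤ n` the `(j, m+1+k)` entry is `-p_{j-k}`
(coefficients out of range being `0`). -/
def sylv (m n : ℕ) (p q : Polynomial ℂ) : Matrix (Fin (m + n + 1)) (Fin (m + n + 2)) ℂ :=
  fun j k =>
    if (k : ℕ) ≤ m then
      (if (k : ℕ) ≤ (j : ℕ) then q.coeff ((j : ℕ) - (k : ℕ)) else 0)
    else
      (if (k : ℕ) - (m + 1) ≤ (j : ℕ) then -p.coeff ((j : ℕ) - ((k : ℕ) - (m + 1))) else 0)

/-!
Column `k` of `sylv m n p q` is the coefficient vector of `X ^ k * q` for `k ≤ m` and of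
`X ^ (k - (m + 1)) * -p` otherwise, a polynomial of degree at most `m + n`. A nonzero row vector
killing every column therefore exists as soon as some linear functional on polynomials of degree
`≤ m + n` kills all these products: evaluation at a common root `z` (the row `(z ^ j)_j`), or, when
`p_m = q_n = 0` so that all the products have degree `< m + n`, the coefficient of `X ^ (m + n)`
(the last unit row; a common root at infinity).
-/

theorem Matrix.rank_lt_card_height_of_vecMul_eq_zero {R m n : Type*} [Field R] [Fintype m]
    [Fintype n] {A : Matrix m n R} {u : m → R} (hu : u ≠ 0) (h : u ᵥ* A = 0) :
    A.rank < Fintype.card m := by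
  refine A.rank_le_card_height.lt_of_ne fun hA => hu ?_
  have hrows : LinearIndependent R A.row := by
    rw [linearIndependent_iff_card_eq_finrank_span, Set.finrank, ← rank_eq_finrank_span_row, hA]
  funext i
  exact Fintype.linearIndependent_iff.mp hrows u (by rwa [vecMul_eq_sum] at h) i

namespace Polynomial

theorem sum_fin_pow_mul_coeff_eq_eval {R : Type*} [CommSemiring R] {N : ℕ} {f : R[X]}
    (hf : f.natDegree < N) (z : R) : ∑ j : Fin N, z ^ (j : ℕ) * f.coeff j = f.eval z := by
  rw [eval_eq_sum_range' hf, ← Fin.sum_univ_eq_sum_range]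
  exact Finset.sum_congr rfl fun j _ => mul_comm _ _

theorem coeff_eq_zero_of_natDegree_le_of_coeff_eq_zero {R : Type*} [Semiring R] {f : R[X]}
    {n i : ℕ} (hf : f.natDegree ≤ n) (hn : f.coeff n = 0) (hi : n ≤ i) : f.coeff i = 0 := by
  rcases hi.eq_or_lt with rfl | hlt
  · exact hn
  · exact coeff_eq_zero_of_natDegree_lt (hf.trans_lt hlt)

end Polynomial

def sylvColumn {R : Type*} [Ring R] (m : ℕ) (p q : R[X]) (k : ℕ) : R[X] :=
  if k ≤ m then X ^ k * q else X ^ (k - (m + 1)) * -p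

section sylvColumn

variable {R : Type*} {m n : ℕ}

theorem sylv_apply (p q : ℂ[X]) (j : Fin (m + n + 1)) (k : Fin (m + n + 2)) :
    sylv m n p q j k = (sylvColumn m p q k).coeff j := by
  unfold sylv sylvColumn
  split_ifs <;> simp [coeff_X_pow_mul', *]

theorem eval_sylvColumn_eq_zero [CommRing R] {p q : R[X]} {z : R} (hp : p.eval z = 0)
    (hq : q.eval z = 0) (k : ℕ) :
    (sylvColumn m p q k).eval z = 0 := by
  unfold sylvColumn
  split_ifs <;> simp [hp, hq]

variable [Ring R] {p q : R[X]}

theorem natDegree_sylvColumn_le (hp : p.natDegree ≤ m) (hq : q.natDegree ≤ n)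
    (k : Fin (m + n + 2)) : (sylvColumn m p q k).natDegree ≤ m + n := by
  have hk := k.isLt
  unfold sylvColumn
  split_ifs
  · exact natDegree_mul_le.trans (by have := natDegree_X_pow_le (R := R) k; omega)
  · exact natDegree_mul_le.trans (by
      have := natDegree_X_pow_le (R := R) (k - (m + 1)); rw [natDegree_neg]; omega)

theorem coeff_sylvColumn_eq_zero (hp : p.natDegree ≤ m) (hq : q.natDegree ≤ n)
    (hpm : p.coeff m = 0) (hqn : q.coeff n = 0) (k : Fin (m + n + 2)) :
    (sylvColumn m p q k).coeff (m + n) = 0 := by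
  have hk := k.isLt
  unfold sylvColumn
  split_ifs
  · rw [coeff_X_pow_mul', if_pos (by omega)]
    exact coeff_eq_zero_of_natDegree_le_of_coeff_eq_zero hq hqn (by omega)
  · rw [coeff_X_pow_mul', if_pos (by omega), coeff_neg, neg_eq_zero]
    exact coeff_eq_zero_of_natDegree_le_of_coeff_eq_zero hp hpm (by omega)

end sylvColumn

/-- if `p, q` have a common root, or `p_m = q_n = 0`, then the Sylvester-like
matrix `S(q,-p)` does not have full row rank `m+n+1`. -/
theorem sylvester_not_full_rank_of_degenerate (m n : ℕ) (p q : Polynomial ℂ)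
    (hp : p.natDegree ≤ m) (hq : q.natDegree ≤ n)
    (hdeg : (∃ z : ℂ, p.eval z = 0 ∧ q.eval z = 0) ∨ (p.coeff m = 0 ∧ q.coeff n = 0)) :
    (sylv m n p q).rank ≠ m + n + 1 := by
  suffices ∃ u ≠ 0, u ᵥ* sylv m n p q = 0 by
    obtain ⟨u, hu, h⟩ := this
    simpa using (rank_lt_card_height_of_vecMul_eq_zero hu h).ne
  rcases hdeg with ⟨z, hpz, hqz⟩ | ⟨hpm, hqn⟩
  · refine ⟨fun j => z ^ (j : ℕ), fun h => by simpa using congrFun h 0, funext fun k => ?_⟩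
    simp only [vecMul, dotProduct, sylv_apply, Pi.zero_apply]
    rw [sum_fin_pow_mul_coeff_eq_eval (Nat.lt_succ_of_le (natDegree_sylvColumn_le hp hq k)),
      eval_sylvColumn_eq_zero hpz hqz]
  · refine ⟨Pi.single (Fin.last (m + n)) 1, by simp, funext fun k => ?_⟩
    simp [vecMul, sylv_apply, coeff_sylvColumn_eq_zero hp hq hpm hqn]
end
end

section
/- Let p of degree ≤ m and q of degree ≤ n have normalized coefficient vector, i.e., ∑|p_j|² + ∑|q_j|² = 1. Then for all |z| ≤ 1, |p(z)|² + |q(z)|² ≤ (m+n+1)·‖S‖², where S = S(q,-p) is the Sylvester-like matrix and ‖·‖ the spectral norm. -/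
noncomputable section
open Matrix Finset Polynomial

/-- Squared Euclidean norm of the stacked coefficient vector of `p/q ∈ R_{m,n}`. -/
def coeffNorm2 (m n : ℕ) (p q : Polynomial ℂ) : ℝ :=
  (∑ j ∈ Finset.range (m + 1), ‖p.coeff j‖ ^ 2)
    + (∑ j ∈ Finset.range (n + 1), ‖q.coeff j‖ ^ 2)

/-!
With `x = (1, z, …, z^{m+n})`, column `k` of the row vector `x S` is `z^k q(z)` for `k ≤ m` and
`-z^{k-m-1} p(z)` for `k > m`; columns `0` and `m + 1` alone give `|p(z)|² + |q(z)|² ≤ ‖x S‖²`.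
On the other hand `‖x S‖ ≤ ‖S‖ ‖x‖`, and `‖x‖² ≤ m + n + 1` when `|z| ≤ 1`.
-/

open scoped Matrix.Norms.L2Operator

lemma specNorm_eq_l2_opNorm {α β : Type} [Fintype α] [Fintype β] [DecidableEq α] [DecidableEq β]
    (A : Matrix α β ℂ) : specNorm A = ‖A‖ := rfl

lemma norm_toLp_star {α : Type} [Fintype α] (x : α → ℂ) :
    ‖WithLp.toLp 2 (star x)‖ = ‖WithLp.toLp 2 x‖ := by
  simp [EuclideanSpace.norm_eq]

lemma norm_vecMul_le_specNorm_mul {α β : Type} [Fintype α] [Fintype β] [DecidableEq α]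
    [DecidableEq β] (A : Matrix α β ℂ) (x : α → ℂ) :
    ‖WithLp.toLp 2 (x ᵥ* A)‖ ≤ specNorm A * ‖WithLp.toLp 2 x‖ := by
  rw [← norm_toLp_star, star_vecMul, specNorm_eq_l2_opNorm, ← l2_opNorm_conjTranspose,
    ← norm_toLp_star x]
  exact l2_opNorm_mulVec Aᴴ (WithLp.toLp 2 (star x))

def powerVec (N : ℕ) (z : ℂ) : Fin N → ℂ := fun j => z ^ (j : ℕ)

lemma norm_powerVec_sq_le {N : ℕ} {z : ℂ} (hz : ‖z‖ ≤ 1) :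
    ‖WithLp.toLp 2 (powerVec N z)‖ ^ 2 ≤ N := by
  rw [EuclideanSpace.norm_sq_eq]
  calc ∑ j, ‖powerVec N z j‖ ^ 2 ≤ ∑ _j : Fin N, (1 : ℝ) := by
        gcongr with j
        simp only [powerVec, norm_pow, ← pow_mul]
        exact pow_le_one₀ (norm_nonneg z) hz
    _ = N := by simp

lemma sum_powerVec_mul_shift (N k : ℕ) (hk : k ≤ N) (z : ℂ) (c : ℕ → ℂ) :
    ∑ j : Fin N, powerVec N z j * (if k ≤ (j : ℕ) then c ((j : ℕ) - k) else 0) =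
      z ^ k * ∑ i ∈ range (N - k), c i * z ^ i := by
  obtain ⟨d, rfl⟩ := Nat.exists_eq_add_of_le hk
  simp only [powerVec]
  rw [Fin.sum_univ_eq_sum_range (fun j => z ^ j * (if k ≤ j then c (j - k) else 0)),
    sum_range_add, Nat.add_sub_cancel_left, mul_sum, sum_eq_zero fun j hj => by simp [(mem_range.1 hj).not_ge]]
  simp only [zero_add, le_add_iff_nonneg_right, zero_le, if_true, Nat.add_sub_cancel_left]
  exact sum_congr rfl fun i _ => by ring

variable {m n : ℕ} {p q : Polynomial ℂ}

lemma vecMul_sylv_of_le (hq : q.natDegree ≤ n) (z : ℂ) (k : Fin (m + n + 2)) (hk : (k : ℕ) ≤ m) :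
    (powerVec (m + n + 1) z ᵥ* sylv m n p q) k = z ^ (k : ℕ) * q.eval z := by
  simp only [vecMul, dotProduct, sylv, if_pos hk]
  rw [sum_powerVec_mul_shift _ _ (by omega), eval_eq_sum_range' (n := m + n + 1 - k) (by omega)]

lemma vecMul_sylv_of_lt (hp : p.natDegree ≤ m) (z : ℂ) (k : Fin (m + n + 2)) (hk : m < (k : ℕ)) :
    (powerVec (m + n + 1) z ᵥ* sylv m n p q) k = -(z ^ ((k : ℕ) - (m + 1)) * p.eval z) := by
  simp only [vecMul, dotProduct, sylv, if_neg hk.not_ge]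
  rw [sum_powerVec_mul_shift _ _ (by omega) z (fun i => -p.coeff i),
    eval_eq_sum_range' (n := m + n + 1 - ((k : ℕ) - (m + 1))) (by omega)]
  simp only [neg_mul, sum_neg_distrib, mul_neg]

lemma eval_sq_add_le_norm_vecMul_sylv_sq (hp : p.natDegree ≤ m) (hq : q.natDegree ≤ n) (z : ℂ) :
    ‖p.eval z‖ ^ 2 + ‖q.eval z‖ ^ 2 ≤
      ‖WithLp.toLp 2 (powerVec (m + n + 1) z ᵥ* sylv m n p q)‖ ^ 2 := by
  have hq_col := vecMul_sylv_of_le (m := m) (p := p) hq z 0 (by simp)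
  have hp_col := vecMul_sylv_of_lt (n := n) (q := q) hp z ⟨m + 1, by omega⟩ (by simp)
  simp only [Fin.val_zero, pow_zero, one_mul, tsub_self] at hq_col hp_col
  set w := powerVec (m + n + 1) z ᵥ* sylv m n p q
  have hne : (0 : Fin (m + n + 2)) ≠ ⟨m + 1, by omega⟩ := by simp [Fin.ext_iff]
  rw [EuclideanSpace.norm_sq_eq]
  calc ‖p.eval z‖ ^ 2 + ‖q.eval z‖ ^ 2 = ∑ k ∈ {0, ⟨m + 1, by omega⟩}, ‖w k‖ ^ 2 := by
        rw [sum_pair hne, hq_col, hp_col, norm_neg, add_comm]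
    _ ≤ ∑ k, ‖w k‖ ^ 2 := sum_le_univ_sum_of_nonneg fun k => by positivity

theorem eval_sq_le_of_normalized_general (m n : ℕ) (p q : Polynomial ℂ)
    (hp : p.natDegree ≤ m) (hq : q.natDegree ≤ n)
    (z : ℂ) (hz : ‖z‖ ≤ 1) :
    ‖p.eval z‖ ^ 2 + ‖q.eval z‖ ^ 2 ≤
      (m + n + 1 : ℝ) * specNorm (sylv m n p q) ^ 2 := by
  set x := WithLp.toLp 2 (powerVec (m + n + 1) z)
  have hx : ‖x‖ ^ 2 ≤ (m + n + 1 : ℝ) := by exact_mod_cast norm_powerVec_sq_le hz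
  calc ‖p.eval z‖ ^ 2 + ‖q.eval z‖ ^ 2
      ≤ ‖WithLp.toLp 2 (powerVec (m + n + 1) z ᵥ* sylv m n p q)‖ ^ 2 :=
        eval_sq_add_le_norm_vecMul_sylv_sq hp hq z
    _ ≤ (specNorm (sylv m n p q) * ‖x‖) ^ 2 := by
        gcongr; exact norm_vecMul_le_specNorm_mul _ _
    _ = ‖x‖ ^ 2 * specNorm (sylv m n p q) ^ 2 := by ring
    _ ≤ (m + n + 1 : ℝ) * specNorm (sylv m n p q) ^ 2 := by gcongr

/-- under the coefficient normalization, for `|z| ≤ 1` one has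
`|p(z)|² + |q(z)|² ≤ (m+n+1)·‖S‖²`. -/
theorem eval_sq_le_of_normalized (m n : ℕ) (p q : Polynomial ℂ)
    (hp : p.natDegree ≤ m) (hq : q.natDegree ≤ n)
    (hnorm : coeffNorm2 m n p q = 1) (z : ℂ) (hz : ‖z‖ ≤ 1) :
    ‖p.eval z‖ ^ 2 + ‖q.eval z‖ ^ 2 ≤
      (m + n + 1 : ℝ) * specNorm (sylv m n p q) ^ 2 :=
  eval_sq_le_of_normalized_general m n p q hp hq z hz
end
end

section
/- Let r = p/q be nondegenerate with normalized coefficient vector, S = S(q,-p), and let r̃ be a function meromorphic on the closed unit disk with sup_{z∈𝔻} χ(r(z), r̃(z)) ≤ 1/3. If σ, τ ∈ 𝔻 satisfy r̃(σ)=0 and r̃(τ)=∞ (a Froissart doublet of r̃), then |σ - τ| ≥ 1/(3√2·(m+n+1)^{3/2}·κ(S)). -/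
/-!
Because `r̃` vanishes at `σ` and has a pole at `τ`, the hypothesis gives `χ(r(σ), 0) ≤ 1/3` and
`χ(r(τ), ∞) ≤ 1/3`; since `χ(0, ∞) = 1`, the triangle inequality forces `χ(r(σ), r(τ)) ≥ 1/3`.
On the other hand, writing `P = (p, q)`, Cauchy–Schwarz gives
`χ(r(σ), r(τ)) ≤ ‖P(σ) - P(τ)‖ / ‖P(σ)‖`. Both quantities are controlled by `S`: the row vector
`(z^j)ⱼ` times `S` lists the values `z^k q(z)` and `-z^k p(z)`, whence `‖P(z)‖ ≥ 1/‖S†‖`, and the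
row vector `(j z^(j-1))ⱼ` times `S` contains `q'(z)` and `-p'(z)`, whence
`|p'|, |q'| ≤ (m+n+1)^(3/2) ‖S‖` on `𝔻`.
-/

noncomputable section
open Matrix Finset Polynomial

/-- Spectral condition number `κ(S) = ‖S‖·‖S†‖` of the Sylvester-like matrix. -/
def condS (m n : ℕ) (p q : Polynomial ℂ) : ℝ :=
  specNorm (sylv m n p q) * specNorm (pinv (sylv m n p q))

/-- Chordal distance `χ(a/b, c/d)` between two points of the Riemann sphere given in
homogeneous coordinates: `|a d - c b| / (√(|a|²+|b|²) √(|c|²+|d|²))`. -/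
def chord (a b c d : ℂ) : ℝ :=
  ‖a * d - c * b‖ /
    (Real.sqrt (‖a‖ ^ 2 + ‖b‖ ^ 2) *
      Real.sqrt (‖c‖ ^ 2 + ‖d‖ ^ 2))

open scoped Matrix.Norms.L2Operator ComplexConjugate

section Chordal

lemma chord_nonneg (a b c d : ℂ) : 0 ≤ chord a b c d := by
  unfold chord
  positivity

lemma chord_mul_right (a b : ℂ) {t : ℂ} (ht : t ≠ 0) (c d : ℂ) :
    chord a b (t * c) (t * d) = chord a b c d := by
  have hnum : a * (t * d) - t * c * b = t * (a * d - c * b) := by ring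
  have hden : √(‖t * c‖ ^ 2 + ‖t * d‖ ^ 2) = ‖t‖ * √(‖c‖ ^ 2 + ‖d‖ ^ 2) := by
    rw [norm_mul, norm_mul, mul_pow, mul_pow, ← mul_add, Real.sqrt_mul (sq_nonneg _),
      Real.sqrt_sq (norm_nonneg _)]
  unfold chord
  rw [hnum, hden, norm_mul, mul_left_comm, mul_div_mul_left _ _ (norm_ne_zero_iff.2 ht)]

lemma norm_sq_add_norm_sq_mul_eq (a b c d : ℂ) :
    (‖a‖ ^ 2 + ‖b‖ ^ 2) * (‖c‖ ^ 2 + ‖d‖ ^ 2) =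
      ‖a * d - c * b‖ ^ 2 + ‖a * conj c + b * conj d‖ ^ 2 := by
  simp only [Complex.sq_norm, Complex.normSq_apply, Complex.mul_re, Complex.mul_im,
    Complex.sub_re, Complex.sub_im, Complex.add_re, Complex.add_im, Complex.conj_re,
    Complex.conj_im]
  ring

lemma norm_le_sqrt_norm_sq_add_norm_sq (a b : ℂ) : ‖a‖ ≤ √(‖a‖ ^ 2 + ‖b‖ ^ 2) :=
  (Real.le_sqrt (norm_nonneg _) (by positivity)).2 (by nlinarith [sq_nonneg ‖b‖])

/-- The triangle inequality for `χ` through `0 = [0 : 1]` and `∞ = [1 : 0]`, as `χ(0, ∞) = 1`. -/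
lemma one_le_chord_add_chord_zero_add_chord_infty {a b c d : ℂ}
    (hab : 0 < ‖a‖ ^ 2 + ‖b‖ ^ 2) (hcd : 0 < ‖c‖ ^ 2 + ‖d‖ ^ 2) :
    1 ≤ chord a b c d + chord a b 0 1 + chord c d 1 0 := by
  set R := √(‖a‖ ^ 2 + ‖b‖ ^ 2)
  set R' := √(‖c‖ ^ 2 + ‖d‖ ^ 2)
  have hR : 0 < R := Real.sqrt_pos.2 hab
  have hR' : 0 < R' := Real.sqrt_pos.2 hcd
  have hb : ‖b‖ ≤ R := by
    simpa only [R, add_comm] using norm_le_sqrt_norm_sq_add_norm_sq b a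
  have hc : ‖c‖ ≤ R' := norm_le_sqrt_norm_sq_add_norm_sq c d
  have hkey : R * R' ≤ ‖a * d - c * b‖ + ‖a‖ * R' + R * ‖d‖ := by
    set x := ‖a * d - c * b‖
    set y := ‖a * conj c + b * conj d‖
    have hx : 0 ≤ x := norm_nonneg _
    have hy : 0 ≤ y := norm_nonneg _
    calc R * R' = √(x ^ 2 + y ^ 2) := by
          rw [← Real.sqrt_mul hab.le, norm_sq_add_norm_sq_mul_eq]
      _ ≤ x + y := Real.sqrt_le_iff.2 ⟨by positivity, by nlinarith⟩
      _ ≤ x + (‖a‖ * ‖c‖ + ‖b‖ * ‖d‖) := by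
          gcongr
          refine (norm_add_le _ _).trans_eq ?_
          simp only [norm_mul, Complex.norm_conj]
      _ ≤ x + ‖a‖ * R' + R * ‖d‖ := by
          have := mul_le_mul_of_nonneg_left hc (norm_nonneg a)
          have := mul_le_mul_of_nonneg_right hb (norm_nonneg d)
          linarith
  have hsum : chord a b c d + chord a b 0 1 + chord c d 1 0 =
      (‖a * d - c * b‖ + ‖a‖ * R' + R * ‖d‖) / (R * R') := by
    simp only [chord, R, R', norm_zero, norm_one, mul_one, mul_zero, one_mul, zero_mul,
      sub_zero, zero_sub, norm_neg, zero_pow two_ne_zero, zero_add, add_zero, one_pow,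
      Real.sqrt_one]
    field_simp
  rw [hsum, le_div_iff₀ (by positivity)]
  linarith

lemma chord_mul_sqrt_le (a b c d : ℂ) :
    chord a b c d * √(‖a‖ ^ 2 + ‖b‖ ^ 2) ≤ √(‖a - c‖ ^ 2 + ‖b - d‖ ^ 2) := by
  set R := √(‖a‖ ^ 2 + ‖b‖ ^ 2)
  set R' := √(‖c‖ ^ 2 + ‖d‖ ^ 2)
  have hcs : ‖a * d - c * b‖ ≤ √(‖a - c‖ ^ 2 + ‖b - d‖ ^ 2) * R' := by
    have h := norm_sq_add_norm_sq_mul_eq (a - c) (b - d) c d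
    rw [show (a - c) * d - c * (b - d) = a * d - c * b by ring] at h
    rw [← Real.sqrt_mul (by positivity), h]
    exact Real.le_sqrt_of_sq_le (by nlinarith [sq_nonneg ‖(a - c) * conj c + (b - d) * conj d‖])
  calc chord a b c d * R = ‖a * d - c * b‖ / R' * (R / R) := by
        unfold chord
        ring
    _ ≤ ‖a * d - c * b‖ / R' := mul_le_of_le_one_right (by positivity) (div_self_le_one R)
    _ ≤ √(‖a - c‖ ^ 2 + ‖b - d‖ ^ 2) := div_le_of_le_mul₀ (by positivity) (by positivity) hcs

end Chordal

lemma Matrix.norm_toLp_vecMul_le {α β : Type*} [Fintype α] [Fintype β] [DecidableEq α]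
    [DecidableEq β] (A : Matrix α β ℂ) (x : α → ℂ) :
    ‖WithLp.toLp 2 (x ᵥ* A)‖ ≤ ‖A‖ * ‖WithLp.toLp 2 x‖ := by
  have h := Matrix.l2_opNorm_mulVec Aᴴ (WithLp.toLp 2 (star x))
  rw [Matrix.l2_opNorm_conjTranspose, Matrix.mulVec_conjTranspose, star_star] at h
  simpa [EuclideanSpace.norm_eq] using h

section PseudoInverse

variable {α β : Type} [Fintype α] [Fintype β] [DecidableEq α] [DecidableEq β]

lemma specNorm_eq_norm (A : Matrix α β ℂ) : specNorm A = ‖A‖ := rfl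

lemma pinv_eq_zero_of_not_isUnit {A : Matrix α β ℂ} (h : ¬IsUnit (A * Aᴴ).det) : pinv A = 0 := by
  rw [pinv, Matrix.nonsing_inv_apply_not_isUnit _ h, Matrix.mul_zero]

lemma mul_pinv_of_isUnit {A : Matrix α β ℂ} (h : IsUnit (A * Aᴴ).det) : A * pinv A = 1 := by
  rw [pinv, ← Matrix.mul_assoc, Matrix.mul_nonsing_inv _ h]

end PseudoInverse

lemma Polynomial.sum_coeff_smul_apply_X_pow {R M : Type*} [CommSemiring R] [AddCommMonoid M]
    [Module R M] (ℓ : R[X] →ₗ[R] M) {f : R[X]} {N : ℕ} (hf : f.natDegree < N) :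
    ∑ j ∈ range N, f.coeff j • ℓ (X ^ j) = ℓ f := by
  conv_rhs => rw [f.as_sum_range' N hf]
  simp only [map_sum, ← C_mul_X_pow_eq_monomial, ← smul_eq_C_mul, map_smul]

lemma Polynomial.norm_eval_sub_eval_le {s : Set ℂ} (hs : Convex ℝ s) (f : ℂ[X]) {C : ℝ}
    (hC : ∀ z ∈ s, ‖(derivative f).eval z‖ ≤ C) {x y : ℂ} (hx : x ∈ s) (hy : y ∈ s) :
    ‖f.eval y - f.eval x‖ ≤ C * ‖y - x‖ :=
  hs.norm_image_sub_le_of_norm_deriv_le (fun _ _ => f.differentiableAt)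
    (fun z hz => (f.deriv (x := z)).symm ▸ hC z hz) hx hy

lemma norm_toLp_eval_derivative_X_pow_le (N : ℕ) {z : ℂ} (hz : ‖z‖ ≤ 1) :
    ‖WithLp.toLp 2 (fun j : Fin (N + 1) => (derivative (X ^ (j : ℕ) : ℂ[X])).eval z)‖ ≤
      ((N : ℝ) + 1) ^ ((3 : ℝ) / 2) := by
  have hentry : ∀ j : Fin (N + 1),
      ‖(derivative (X ^ (j : ℕ) : ℂ[X])).eval z‖ ^ 2 ≤ (N : ℝ) ^ 2 := by
    intro j
    have hj : ((j : ℕ) : ℝ) ≤ N := by exact_mod_cast Nat.lt_succ_iff.1 j.isLt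
    have hpow : ‖z‖ ^ ((j : ℕ) - 1) ≤ 1 := pow_le_one₀ (norm_nonneg z) hz
    simp only [derivative_X_pow, eval_mul, eval_C, eval_pow, eval_X, norm_mul, norm_pow,
      Complex.norm_natCast]
    gcongr
    exact (mul_le_of_le_one_right (Nat.cast_nonneg _) hpow).trans hj
  have hrpow : ((N : ℝ) + 1) ^ ((3 : ℝ) / 2) = √(((N : ℝ) + 1) ^ 3) := by
    rw [Real.sqrt_eq_rpow, ← Real.rpow_natCast, ← Real.rpow_mul (by positivity)]
    norm_num
  rw [EuclideanSpace.norm_eq, hrpow]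
  refine Real.sqrt_le_sqrt ((Finset.sum_le_card_nsmul _ _ _ fun j _ => hentry j).trans ?_)
  simp only [card_univ, Fintype.card_fin, nsmul_eq_mul]
  push_cast
  nlinarith [sq_nonneg (N : ℝ)]

section Sylvester

variable {m n : ℕ} {p q : ℂ[X]}

lemma sylv_apply_eq_coeff (j : Fin (m + n + 1)) (k : Fin (m + n + 2)) :
    sylv m n p q j k = if (k : ℕ) ≤ m then (X ^ (k : ℕ) * q).coeff j
      else -(X ^ ((k : ℕ) - (m + 1)) * p).coeff j := by
  simp only [sylv, coeff_X_pow_mul']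
  split_ifs <;> simp

lemma vecMul_sylv_apply (ℓ : ℂ[X] →ₗ[ℂ] ℂ) (hp : p.natDegree ≤ m) (hq : q.natDegree ≤ n)
    (k : Fin (m + n + 2)) :
    ((fun j : Fin (m + n + 1) => ℓ (X ^ (j : ℕ))) ᵥ* sylv m n p q) k =
      if (k : ℕ) ≤ m then ℓ (X ^ (k : ℕ) * q) else -ℓ (X ^ ((k : ℕ) - (m + 1)) * p) := by
  have hsum : ∀ f : ℂ[X], f.natDegree ≤ m + n →
      ∑ j : Fin (m + n + 1), ℓ (X ^ (j : ℕ)) * f.coeff j = ℓ f := fun f hf => by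
    rw [← sum_coeff_smul_apply_X_pow ℓ (Nat.lt_succ_of_le hf),
      ← Fin.sum_univ_eq_sum_range (fun j => f.coeff j • ℓ (X ^ j))]
    simp only [smul_eq_mul, mul_comm]
  simp only [vecMul, dotProduct, sylv_apply_eq_coeff]
  have hk := k.isLt
  split_ifs
  · exact hsum _ (natDegree_mul_le.trans (by rw [natDegree_X_pow]; omega))
  · rw [← hsum _ (natDegree_mul_le.trans (by rw [natDegree_X_pow]; omega)), ← sum_neg_distrib]
    simp only [mul_neg]

lemma norm_derivative_eval_le (hp : p.natDegree ≤ m) (hq : q.natDegree ≤ n) {z : ℂ}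
    (hz : ‖z‖ ≤ 1) :
    ‖(derivative p).eval z‖ ≤ (m + n + 1 : ℝ) ^ ((3 : ℝ) / 2) * ‖sylv m n p q‖ ∧
      ‖(derivative q).eval z‖ ≤ (m + n + 1 : ℝ) ^ ((3 : ℝ) / 2) * ‖sylv m n p q‖ := by
  set ℓ : ℂ[X] →ₗ[ℂ] ℂ := leval z ∘ₗ derivative
  have hrow : ‖WithLp.toLp 2 ((fun j : Fin (m + n + 1) => ℓ (X ^ (j : ℕ))) ᵥ* sylv m n p q)‖ ≤
      (m + n + 1 : ℝ) ^ ((3 : ℝ) / 2) * ‖sylv m n p q‖ := by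
    refine (Matrix.norm_toLp_vecMul_le _ _).trans ?_
    rw [mul_comm]
    gcongr
    simpa [ℓ] using norm_toLp_eval_derivative_X_pow_le (m + n) hz
  have hentry : ∀ k : Fin (m + n + 2), ‖if (k : ℕ) ≤ m then ℓ (X ^ (k : ℕ) * q)
      else -ℓ (X ^ ((k : ℕ) - (m + 1)) * p)‖ ≤ (m + n + 1 : ℝ) ^ ((3 : ℝ) / 2) * ‖sylv m n p q‖ :=
    fun k => vecMul_sylv_apply ℓ hp hq k ▸ (PiLp.norm_apply_le _ k).trans hrow
  constructor
  · simpa [ℓ] using hentry ⟨m + 1, by omega⟩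
  · simpa [ℓ] using hentry ⟨0, by omega⟩

lemma norm_toLp_vecMul_sylv_eval_le (hp : p.natDegree ≤ m) (hq : q.natDegree ≤ n) (z : ℂ) :
    ‖WithLp.toLp 2 ((fun j : Fin (m + n + 1) => leval z (X ^ (j : ℕ))) ᵥ* sylv m n p q)‖ ≤
      ‖WithLp.toLp 2 (fun j : Fin (m + n + 1) => leval z (X ^ (j : ℕ)))‖ *
        √(‖p.eval z‖ ^ 2 + ‖q.eval z‖ ^ 2) := by
  set g : ℕ → ℝ := fun k => (‖z‖ ^ 2) ^ k
  have hentry : ∀ k : Fin (m + n + 2),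
      ‖((fun j : Fin (m + n + 1) => leval z (X ^ (j : ℕ))) ᵥ* sylv m n p q) k‖ ^ 2 =
        if (k : ℕ) ≤ m then g k * ‖q.eval z‖ ^ 2 else g ((k : ℕ) - (m + 1)) * ‖p.eval z‖ ^ 2 := by
    intro k
    rw [vecMul_sylv_apply _ hp hq]
    split_ifs <;> simp [g, mul_pow, ← pow_mul, mul_comm 2]
  have hrow : ∑ k : Fin (m + n + 2),
      ‖((fun j : Fin (m + n + 1) => leval z (X ^ (j : ℕ))) ᵥ* sylv m n p q) k‖ ^ 2 =
        (∑ k ∈ range (m + 1), g k) * ‖q.eval z‖ ^ 2 +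
          (∑ k ∈ range (n + 1), g k) * ‖p.eval z‖ ^ 2 := by
    rw [sum_congr rfl fun k _ => hentry k, Fin.sum_univ_eq_sum_range (fun k =>
      if k ≤ m then g k * ‖q.eval z‖ ^ 2 else g (k - (m + 1)) * ‖p.eval z‖ ^ 2),
      show m + n + 2 = (m + 1) + (n + 1) by omega, sum_range_add, sum_mul, sum_mul]
    congr 1 <;> refine sum_congr rfl fun k hk => ?_
    · rw [if_pos (by simpa [Nat.lt_succ_iff] using hk)]
    · rw [if_neg (by omega), Nat.add_sub_cancel_left]
  have hcol :
      ∑ j : Fin (m + n + 1), ‖leval z (X ^ (j : ℕ))‖ ^ 2 = ∑ k ∈ range (m + n + 1), g k := by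
    rw [← Fin.sum_univ_eq_sum_range]
    simp [g, ← pow_mul, mul_comm 2]
  have hpartial : ∀ N ≤ m + n, ∑ k ∈ range (N + 1), g k ≤ ∑ k ∈ range (m + n + 1), g k :=
    fun N hN => sum_le_sum_of_subset_of_nonneg (range_subset_range.2 (by omega))
      fun _ _ _ => by positivity
  rw [EuclideanSpace.norm_eq, EuclideanSpace.norm_eq, ← Real.sqrt_mul (by positivity)]
  refine Real.sqrt_le_sqrt ?_
  simp only [hrow, hcol]
  nlinarith [hpartial m (by omega), hpartial n (by omega), sq_nonneg ‖p.eval z‖,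
    sq_nonneg ‖q.eval z‖]

lemma one_le_sqrt_mul_norm_pinv (hp : p.natDegree ≤ m) (hq : q.natDegree ≤ n)
    (hS : IsUnit (sylv m n p q * (sylv m n p q)ᴴ).det) (z : ℂ) :
    1 ≤ √(‖p.eval z‖ ^ 2 + ‖q.eval z‖ ^ 2) * ‖pinv (sylv m n p q)‖ := by
  set y : Fin (m + n + 1) → ℂ := fun j => leval z (X ^ (j : ℕ))
  have hy : 1 ≤ ‖WithLp.toLp 2 y‖ := by
    simpa [y] using PiLp.norm_apply_le (WithLp.toLp 2 y) 0
  have hrecover : y = (y ᵥ* sylv m n p q) ᵥ* pinv (sylv m n p q) := by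
    rw [vecMul_vecMul, mul_pinv_of_isUnit hS, vecMul_one]
  have h : ‖WithLp.toLp 2 y‖ * 1 ≤
      ‖WithLp.toLp 2 y‖ * (√(‖p.eval z‖ ^ 2 + ‖q.eval z‖ ^ 2) * ‖pinv (sylv m n p q)‖) := by
    calc ‖WithLp.toLp 2 y‖ * 1
        = ‖WithLp.toLp 2 ((y ᵥ* sylv m n p q) ᵥ* pinv (sylv m n p q))‖ := by
          rw [mul_one, ← hrecover]
      _ ≤ ‖pinv (sylv m n p q)‖ * ‖WithLp.toLp 2 (y ᵥ* sylv m n p q)‖ :=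
          Matrix.norm_toLp_vecMul_le _ _
      _ ≤ ‖pinv (sylv m n p q)‖ *
            (‖WithLp.toLp 2 y‖ * √(‖p.eval z‖ ^ 2 + ‖q.eval z‖ ^ 2)) := by
          gcongr
          exact norm_toLp_vecMul_sylv_eval_le hp hq z
      _ = _ := by ring
  exact le_of_mul_le_mul_left h (one_pos.trans_le hy)

lemma condS_eq_zero_of_not_isUnit (hS : ¬IsUnit (sylv m n p q * (sylv m n p q)ᴴ).det) :
    condS m n p q = 0 := by
  rw [condS, pinv_eq_zero_of_not_isUnit hS, specNorm_eq_norm (0 : Matrix _ _ ℂ), norm_zero,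
    mul_zero]

lemma chord_eval_le_mul_norm_sub (hp : p.natDegree ≤ m) (hq : q.natDegree ≤ n)
    (hS : IsUnit (sylv m n p q * (sylv m n p q)ᴴ).det) {σ τ : ℂ}
    (hσ : ‖σ‖ ≤ 1) (hτ : ‖τ‖ ≤ 1) :
    chord (p.eval σ) (q.eval σ) (p.eval τ) (q.eval τ) ≤
      √2 * (m + n + 1 : ℝ) ^ ((3 : ℝ) / 2) * condS m n p q * ‖σ - τ‖ := by
  set M := (m + n + 1 : ℝ) ^ ((3 : ℝ) / 2) * ‖sylv m n p q‖
  have hlip : ∀ f : ℂ[X], (∀ z ∈ Metric.closedBall (0 : ℂ) 1, ‖(derivative f).eval z‖ ≤ M) →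
      ‖f.eval σ - f.eval τ‖ ≤ M * ‖σ - τ‖ := fun f hf =>
    f.norm_eval_sub_eval_le (convex_closedBall 0 1) hf (mem_closedBall_zero_iff.2 hτ)
      (mem_closedBall_zero_iff.2 hσ)
  have hΔ : √(‖p.eval σ - p.eval τ‖ ^ 2 + ‖q.eval σ - q.eval τ‖ ^ 2) ≤ √2 * (M * ‖σ - τ‖) := by
    have hp' := hlip p fun z hz => (norm_derivative_eval_le hp hq (mem_closedBall_zero_iff.1 hz)).1
    have hq' := hlip q fun z hz => (norm_derivative_eval_le hp hq (mem_closedBall_zero_iff.1 hz)).2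
    rw [← Real.sqrt_sq (by positivity : 0 ≤ M * ‖σ - τ‖), ← Real.sqrt_mul zero_le_two]
    refine Real.sqrt_le_sqrt ?_
    nlinarith [pow_le_pow_left₀ (norm_nonneg _) hp' 2, pow_le_pow_left₀ (norm_nonneg _) hq' 2]
  calc chord (p.eval σ) (q.eval σ) (p.eval τ) (q.eval τ)
      ≤ chord (p.eval σ) (q.eval σ) (p.eval τ) (q.eval τ) *
          (√(‖p.eval σ‖ ^ 2 + ‖q.eval σ‖ ^ 2) * ‖pinv (sylv m n p q)‖) :=
        le_mul_of_one_le_right (chord_nonneg _ _ _ _) (one_le_sqrt_mul_norm_pinv hp hq hS σ)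
    _ ≤ √(‖p.eval σ - p.eval τ‖ ^ 2 + ‖q.eval σ - q.eval τ‖ ^ 2) * ‖pinv (sylv m n p q)‖ := by
        rw [← mul_assoc]
        gcongr
        exact chord_mul_sqrt_le _ _ _ _
    _ ≤ √2 * (M * ‖σ - τ‖) * ‖pinv (sylv m n p q)‖ := by gcongr
    _ = √2 * (m + n + 1 : ℝ) ^ ((3 : ℝ) / 2) * condS m n p q * ‖σ - τ‖ := by
        rw [condS, specNorm_eq_norm, specNorm_eq_norm]
        ring

end Sylvester

theorem froissart_doublet_separation_general (m n : ℕ) (p q : Polynomial ℂ)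
    (hp : p.natDegree ≤ m) (hq : q.natDegree ≤ n)
    (u v : ℂ → ℂ)
    (hclose : ∀ z ∈ Metric.closedBall (0 : ℂ) 1,
      chord (p.eval z) (q.eval z) (u z) (v z) ≤ 1 / 3)
    (σ τ : ℂ) (hσ : ‖σ‖ ≤ 1) (hτ : ‖τ‖ ≤ 1)
    (hzero : u σ = 0) (hzero' : v σ ≠ 0) (hpole : v τ = 0) (hpole' : u τ ≠ 0) :
    ‖σ - τ‖ ≥
      1 / (3 * Real.sqrt 2 * (m + n + 1 : ℝ) ^ ((3 : ℝ) / 2) * condS m n p q) := by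
  by_cases hS : IsUnit (sylv m n p q * (sylv m n p q)ᴴ).det
  swap
  -- `pinv` is junk (`0`) when `S Sᴴ` is singular, so `κ(S) = 0` and the bound is `1 / 0 = 0`.
  · simp [condS_eq_zero_of_not_isUnit hS]
  have hN : ∀ z, 0 < ‖p.eval z‖ ^ 2 + ‖q.eval z‖ ^ 2 := fun z =>
    Real.sqrt_pos.1 <| pos_of_mul_pos_left
      (one_pos.trans_le (one_le_sqrt_mul_norm_pinv hp hq hS z)) (norm_nonneg _)
  have hσ0 : chord (p.eval σ) (q.eval σ) 0 1 ≤ 1 / 3 := by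
    rw [← chord_mul_right _ _ hzero' 0 1, mul_zero, mul_one, ← hzero]
    exact hclose σ (mem_closedBall_zero_iff.2 hσ)
  have hτinf : chord (p.eval τ) (q.eval τ) 1 0 ≤ 1 / 3 := by
    rw [← chord_mul_right _ _ hpole' 1 0, mul_zero, mul_one, ← hpole]
    exact hclose τ (mem_closedBall_zero_iff.2 hτ)
  have hsep : 1 / 3 ≤ chord (p.eval σ) (q.eval σ) (p.eval τ) (q.eval τ) := by
    linarith [one_le_chord_add_chord_zero_add_chord_infty (hN σ) (hN τ)]
  have hK := hsep.trans (chord_eval_le_mul_norm_sub hp hq hS hσ hτ)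
  set K := √2 * (m + n + 1 : ℝ) ^ ((3 : ℝ) / 2) * condS m n p q
  have hK0 : 0 < K := pos_of_mul_pos_left (by linarith) (norm_nonneg _)
  rw [ge_iff_le, mul_assoc 3, mul_assoc 3, div_le_iff₀ (by positivity)]
  linarith

/-- if `r = p/q` is nondegenerate and normalized and `r̃ = u/v` is
meromorphic on the closed unit disk with `χ_𝔻(r, r̃) ≤ 1/3`, then any zero `σ` and pole `τ`
of `r̃` in the closed disk satisfy `|σ - τ| ≥ 1/(3√2 (m+n+1)^{3/2} κ(S))`. -/
theorem froissart_doublet_separation (m n : ℕ) (p q : Polynomial ℂ)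
    (hp : p.natDegree ≤ m) (hq : q.natDegree ≤ n)
    (hco : IsCoprime p q) (hlead : p.coeff m ≠ 0 ∨ q.coeff n ≠ 0)
    (hnorm : coeffNorm2 m n p q = 1)
    (u v : ℂ → ℂ)
    (hu : AnalyticOnNhd ℂ u (Metric.closedBall 0 1))
    (hv : AnalyticOnNhd ℂ v (Metric.closedBall 0 1))
    (huv : ∀ z ∈ Metric.closedBall (0 : ℂ) 1, (u z, v z) ≠ (0, 0))
    (hclose : ∀ z ∈ Metric.closedBall (0 : ℂ) 1,
      chord (p.eval z) (q.eval z) (u z) (v z) ≤ 1 / 3)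
    (σ τ : ℂ) (hσ : ‖σ‖ ≤ 1) (hτ : ‖τ‖ ≤ 1)
    (hzero : u σ = 0) (hzero' : v σ ≠ 0) (hpole : v τ = 0) (hpole' : u τ ≠ 0) :
    ‖σ - τ‖ ≥
      1 / (3 * Real.sqrt 2 * (m + n + 1 : ℝ) ^ ((3 : ℝ) / 2) * condS m n p q) :=
  froissart_doublet_separation_general m n p q hp hq u v hclose σ τ hσ hτ hzero hzero' hpole hpole'
end
end

section
/- Let r = p/q ∈ R_{m,n} be a nondegenerate rational function with normalized coefficient vector, and suppose z₀ in the closed unit disk is a simple pole of r with residue α₀ = p(z₀)/q'(z₀). Then |α₀| ≥ 1/(√2·(m+n+1)^{3/2}·κ(S)), where S = S(q,-p). -/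
noncomputable section
open Matrix Finset Polynomial

/-!
With `S = S(q,-p)`, the coefficient vector of a pair `a ∈ ℂ_m[X]`, `b ∈ ℂ_n[X]` is mapped by `S`
to the coefficients of `q a - p b`. Coprimality and nondegeneracy make `S` surjective, so
`S S† = 1`. Solving `S x = w` by `x = S† w` with `w = (z̄₀ʲ)ⱼ` produces `a, b` such that
`(q a - p b)(z₀) = T := ∑ⱼ |z₀|²ʲ ≥ 1`; since `q(z₀) = 0` this reads `|p(z₀)| |b(z₀)| = T`, while
Cauchy–Schwarz gives `|b(z₀)| ≤ √T ‖x‖ ≤ ‖S†‖ T`. Hence `|p(z₀)| ‖S†‖ ≥ 1`.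
Moreover one of the columns of `S` holding the coefficients of `q` and of `-p` has norm at least
`1/√2`, so `√2 ‖S‖ ≥ 1`, and Cauchy–Schwarz bounds `|q'(z₀)|` by `(n+1)^{3/2}` on the unit disk.
-/

open scoped ComplexOrder

theorem isUnit_mul_conjTranspose_of_surjective {α β : Type*} [Fintype α] [Fintype β]
    [DecidableEq α] (A : Matrix α β ℂ)
    (hA : Function.Surjective A.mulVec) : IsUnit (A * Aᴴ) := by
  refine Matrix.mulVec_injective_iff_isUnit.1 <|
    (injective_iff_map_eq_zero (Matrix.mulVecLin (A * Aᴴ))).2 fun x hx => ?_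
  obtain ⟨y, rfl⟩ := hA x
  rw [Matrix.mulVecLin_apply, Matrix.self_mul_conjTranspose_mulVec_eq_zero] at hx
  have hstar : star (A *ᵥ y) ᵥ* A = star (Aᴴ *ᵥ A *ᵥ y) := by
    rw [Matrix.star_mulVec Aᴴ, Matrix.conjTranspose_conjTranspose]
  rw [← dotProduct_star_self_eq_zero, Matrix.dotProduct_mulVec, hstar, hx, star_zero,
    zero_dotProduct]

section SpectralNorm

variable {α β : Type} [Fintype α] [Fintype β] [DecidableEq α] [DecidableEq β]

theorem sqrt_sum_norm_sq_mulVec_le (A : Matrix α β ℂ) (x : β → ℂ) :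
    √(∑ i, ‖(A *ᵥ x) i‖ ^ 2) ≤ specNorm A * √(∑ j, ‖x j‖ ^ 2) := by
  simpa [EuclideanSpace.norm_eq, specNorm] using
    (Matrix.toEuclideanLin A).toContinuousLinearMap.le_opNorm (WithLp.toLp 2 x)

theorem sqrt_sum_norm_sq_col_le (A : Matrix α β ℂ) (k : β) :
    √(∑ i, ‖A i k‖ ^ 2) ≤ specNorm A := by
  simpa [Pi.single_apply, apply_ite] using sqrt_sum_norm_sq_mulVec_le A (Pi.single k 1)

theorem mul_pinv_of_surjective (A : Matrix α β ℂ) (hA : Function.Surjective A.mulVec) :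
    A * pinv A = 1 := by
  rw [pinv, ← Matrix.mul_assoc,
    Matrix.mul_nonsing_inv _ ((Matrix.isUnit_iff_isUnit_det _).1
      (isUnit_mul_conjTranspose_of_surjective A hA))]

end SpectralNorm

open Polynomial Finset

theorem coeff_mul_eq_sum_range {R : Type*} [CommSemiring R] (r a : R[X]) {d : ℕ}
    (ha : a.natDegree ≤ d) (j : ℕ) :
    (r * a).coeff j = ∑ k ∈ range (d + 1), (if k ≤ j then r.coeff (j - k) else 0) * a.coeff k := by
  rw [mul_comm, coeff_mul, Finset.Nat.sum_antidiagonal_eq_sum_range_succ_mk]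
  simp_rw [ite_mul, zero_mul, ← Finset.sum_filter, mul_comm (r.coeff _)]
  symm
  refine Finset.sum_subset (fun k hk => ?_) fun k hk hkd => ?_
  · simp only [Finset.mem_filter, Finset.mem_range] at hk ⊢
    omega
  · simp only [Finset.mem_filter, Finset.mem_range, not_and] at hk hkd
    rw [coeff_eq_zero_of_natDegree_lt (by omega), zero_mul]

theorem IsCoprime.exists_mul_add_mul_eq_of_natDegree_le {K : Type*} [Field K] {r s : K[X]}
    (hrs : IsCoprime r s) (hr : r ≠ 0) {d : ℕ} (hs : s.natDegree ≤ d) {c : K[X]}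
    (hc : c.natDegree ≤ r.natDegree + d) :
    ∃ a b : K[X], a.natDegree ≤ d ∧ b.natDegree ≤ r.natDegree ∧ r * a + s * b = c := by
  obtain ⟨u, v, huv⟩ := hrs
  have hsum : r * (c * u + s * (c * v / r)) + s * (c * v % r) = c := by
    linear_combination s * EuclideanDomain.div_add_mod (c * v) r + c * huv
  refine ⟨_, _, ?_, natDegree_le_natDegree (degree_mod_lt _ hr).le, hsum⟩
  set a := c * u + s * (c * v / r)
  rcases eq_or_ne a 0 with ha | ha
  · simp [ha]
  have hdeg : (r * a).natDegree ≤ r.natDegree + d := by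
    rw [eq_sub_of_add_eq hsum]
    refine (natDegree_sub_le _ _).trans (max_le hc (natDegree_mul_le.trans ?_))
    have := natDegree_le_natDegree (degree_mod_lt (c * v) hr).le
    omega
  rw [natDegree_mul hr ha] at hdeg
  omega

def coeffVec (m n : ℕ) (a b : ℂ[X]) : Fin (m + n + 2) → ℂ :=
  fun k => if (k : ℕ) ≤ m then a.coeff k else b.coeff ((k : ℕ) - (m + 1))

theorem sum_fin_eq_sum_range_add_sum_range {M : Type*} [AddCommMonoid M] (m n : ℕ)
    (f : ℕ → M) :
    ∑ k : Fin (m + n + 2), f k = ∑ k ∈ range (m + 1), f k + ∑ i ∈ range (n + 1), f (m + 1 + i) := by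
  rw [Fin.sum_univ_eq_sum_range f, ← Finset.sum_range_add, show m + 1 + (n + 1) = m + n + 2 by ring]

theorem sylv_mulVec_coeffVec (m n : ℕ) (p q : ℂ[X]) {a b : ℂ[X]} (ha : a.natDegree ≤ m)
    (hb : b.natDegree ≤ n) (j : Fin (m + n + 1)) :
    (sylv m n p q *ᵥ coeffVec m n a b) j = (q * a - p * b).coeff j := by
  set f : ℕ → ℂ := fun k =>
    if k ≤ m then (if k ≤ (j : ℕ) then q.coeff (j - k) else 0) * a.coeff k
    else (if k - (m + 1) ≤ (j : ℕ) then (-p).coeff (j - (k - (m + 1))) else 0)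
      * b.coeff (k - (m + 1)) with hf
  have hentry (k : Fin (m + n + 2)) : sylv m n p q j k * coeffVec m n a b k = f k := by
    by_cases hk : (k : ℕ) ≤ m <;> simp [sylv, coeffVec, hf, hk]
  rw [Matrix.mulVec, dotProduct, Finset.sum_congr rfl fun k _ => hentry k,
    sum_fin_eq_sum_range_add_sum_range, sub_eq_add_neg, ← neg_mul, coeff_add,
    coeff_mul_eq_sum_range q a ha, coeff_mul_eq_sum_range (-p) b hb]
  congr 1 <;> refine Finset.sum_congr rfl fun k hk => ?_
  · simp [hf, Nat.le_of_lt_succ (Finset.mem_range.1 hk)]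
  · simp only [hf, show ¬ m + 1 + k ≤ m by omega, if_false, Nat.add_sub_cancel_left]

theorem exists_coeffVec_eq (m n : ℕ) (x : Fin (m + n + 2) → ℂ) :
    ∃ a b : ℂ[X], a.natDegree ≤ m ∧ b.natDegree ≤ n ∧ coeffVec m n a b = x := by
  refine ⟨ofFn (m + 1) fun i => x ⟨i, by omega⟩, ofFn (n + 1) fun i => x ⟨m + 1 + i, by omega⟩,
    Nat.le_of_lt_succ (ofFn_natDegree_lt (by omega) _),
    Nat.le_of_lt_succ (ofFn_natDegree_lt (by omega) _), funext fun k => ?_⟩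
  by_cases hk : (k : ℕ) ≤ m
  · simp [coeffVec, hk, ofFn_coeff_eq_val_of_lt _ (Nat.lt_succ_of_le hk)]
  · rw [coeffVec, if_neg hk, ofFn_coeff_eq_val_of_lt _ (by omega)]
    congr 1
    ext
    simp only
    omega

theorem sum_norm_sq_coeffVec (m n : ℕ) (a b : ℂ[X]) :
    ∑ k, ‖coeffVec m n a b k‖ ^ 2 = coeffNorm2 m n a b := by
  simp only [coeffVec]
  rw [sum_fin_eq_sum_range_add_sum_range m n
    (fun k => ‖if k ≤ m then a.coeff k else b.coeff (k - (m + 1))‖ ^ 2), coeffNorm2]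
  congr 1 <;> refine Finset.sum_congr rfl fun k hk => ?_
  · simp [Nat.le_of_lt_succ (Finset.mem_range.1 hk)]
  · simp only [show ¬ m + 1 + k ≤ m by omega, if_false, Nat.add_sub_cancel_left]

theorem exists_mul_sub_mul_eq_of_natDegree_le {m n : ℕ} {p q : ℂ[X]} (hp : p.natDegree ≤ m)
    (hq : q.natDegree ≤ n) (hco : IsCoprime p q) (hlead : p.coeff m ≠ 0 ∨ q.coeff n ≠ 0)
    {c : ℂ[X]} (hc : c.natDegree ≤ m + n) :
    ∃ a b : ℂ[X], a.natDegree ≤ m ∧ b.natDegree ≤ n ∧ q * a - p * b = c := by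
  rcases hlead with hpm | hqn
  · have hdeg : (-p).natDegree = m := by
      rw [natDegree_neg]
      exact hp.antisymm (le_natDegree_of_ne_zero hpm)
    obtain ⟨b, a, hb, ha, hab⟩ := hco.neg_left.exists_mul_add_mul_eq_of_natDegree_le
      (neg_ne_zero.2 (by rintro rfl; simp at hpm)) hq (c := c) (by omega)
    exact ⟨a, b, hdeg ▸ ha, hb, by linear_combination hab⟩
  · have hdeg : q.natDegree = n := hq.antisymm (le_natDegree_of_ne_zero hqn)
    obtain ⟨a, b, ha, hb, hab⟩ := hco.symm.neg_right.exists_mul_add_mul_eq_of_natDegree_le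
      (by rintro rfl; simp at hqn) ((natDegree_neg p).trans_le hp) (c := c) (by omega)
    exact ⟨a, b, ha, hdeg ▸ hb, by linear_combination hab⟩

theorem sylv_mulVec_surjective {m n : ℕ} {p q : ℂ[X]} (hp : p.natDegree ≤ m)
    (hq : q.natDegree ≤ n) (hco : IsCoprime p q) (hlead : p.coeff m ≠ 0 ∨ q.coeff n ≠ 0) :
    Function.Surjective (sylv m n p q).mulVec := by
  intro w
  obtain ⟨a, b, ha, hb, hab⟩ := exists_mul_sub_mul_eq_of_natDegree_le hp hq hco hlead
    (Nat.le_of_lt_succ (ofFn_natDegree_lt (Nat.succ_pos _) w))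
  exact ⟨coeffVec m n a b, funext fun j => by
    rw [sylv_mulVec_coeffVec m n p q ha hb, hab, ofFn_coeff_eq_val_of_lt]⟩

theorem norm_eval_le_of_natDegree_lt {𝕜 : Type*} [NormedField 𝕜] {b : 𝕜[X]} {N : ℕ}
    (hb : b.natDegree < N) (z : 𝕜) :
    ‖b.eval z‖ ≤ √(∑ k ∈ range N, (‖z‖ ^ k) ^ 2) * √(∑ k ∈ range N, ‖b.coeff k‖ ^ 2) := by
  rw [eval_eq_sum_range' hb]
  refine (norm_sum_le _ _).trans ((Finset.sum_le_sum fun k _ => ?_).trans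
    (Real.sum_mul_le_sqrt_mul_sqrt _ _ _))
  rw [norm_mul, norm_pow, mul_comm]

theorem eval_eq_sum_norm_sq_of_coeff_eq_star_pow {c : ℂ[X]} {N : ℕ} (hc : c.natDegree < N)
    {z : ℂ} (hcz : ∀ j < N, c.coeff j = star z ^ j) :
    c.eval z = ((∑ j ∈ range N, (‖z‖ ^ j) ^ 2 : ℝ) : ℂ) := by
  rw [eval_eq_sum_range' hc, Complex.ofReal_sum]
  refine Finset.sum_congr rfl fun j hj => ?_
  rw [hcz j (Finset.mem_range.1 hj), ← mul_pow, Complex.star_def, Complex.conj_mul']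
  push_cast
  ring

theorem norm_derivative_eval_le_s12 {q : ℂ[X]} {n : ℕ} (hq : q.natDegree ≤ n)
    (hQ : ∑ j ∈ range (n + 1), ‖q.coeff j‖ ^ 2 ≤ 1) {z : ℂ} (hz : ‖z‖ ≤ 1) :
    ‖q.derivative.eval z‖ ≤ ((n : ℝ) + 1) ^ ((3 : ℝ) / 2) := by
  have hpow : ∑ k ∈ range (n + 1), (‖z‖ ^ k) ^ 2 ≤ n + 1 := by
    calc _ ≤ ∑ _k ∈ range (n + 1), (1 : ℝ) := Finset.sum_le_sum fun k _ =>
          pow_le_one₀ (by positivity) (pow_le_one₀ (norm_nonneg z) hz)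
      _ = n + 1 := by simp
  have hshift : ∑ k ∈ range (n + 1), ‖q.coeff (k + 1)‖ ^ 2 ≤ ∑ j ∈ range (n + 1), ‖q.coeff j‖ ^ 2 :=
    calc _ ≤ ∑ k ∈ range (n + 1), ‖q.coeff (k + 1)‖ ^ 2 + ‖q.coeff 0‖ ^ 2 :=
          le_add_of_nonneg_right (by positivity)
      _ = ∑ j ∈ range (n + 1 + 1), ‖q.coeff j‖ ^ 2 :=
          (Finset.sum_range_succ' (fun j => ‖q.coeff j‖ ^ 2) _).symm
      _ = _ := by
          rw [Finset.sum_range_succ, coeff_eq_zero_of_natDegree_lt (by omega), norm_zero,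
            zero_pow two_ne_zero, add_zero]
  have hcoeff : ∑ k ∈ range (n + 1), ‖q.derivative.coeff k‖ ^ 2 ≤ ((n : ℝ) + 1) ^ 2 := by
    calc ∑ k ∈ range (n + 1), ‖q.derivative.coeff k‖ ^ 2
        ≤ ∑ k ∈ range (n + 1), ((n : ℝ) + 1) ^ 2 * ‖q.coeff (k + 1)‖ ^ 2 := by
          refine Finset.sum_le_sum fun k hk => ?_
          rw [coeff_derivative, norm_mul, mul_pow, mul_comm]
          gcongr
          rw [← Nat.cast_succ, Complex.norm_natCast, Nat.cast_succ]
          exact_mod_cast Finset.mem_range.1 hk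
      _ ≤ ((n : ℝ) + 1) ^ 2 := by
          rw [← Finset.mul_sum]
          exact mul_le_of_le_one_right (by positivity) (hshift.trans hQ)
  calc ‖q.derivative.eval z‖
      ≤ √(∑ k ∈ range (n + 1), (‖z‖ ^ k) ^ 2) *
          √(∑ k ∈ range (n + 1), ‖q.derivative.coeff k‖ ^ 2) :=
        norm_eval_le_of_natDegree_lt ((natDegree_derivative_le q).trans_lt (by omega)) z
    _ ≤ √((n : ℝ) + 1) * √(((n : ℝ) + 1) ^ 2) := by gcongr
    _ = ((n : ℝ) + 1) ^ ((3 : ℝ) / 2) := by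
        rw [Real.sqrt_sq (by positivity), Real.sqrt_eq_rpow, ← Real.rpow_add_one (by positivity)]
        norm_num

theorem exists_eval_mul_sub_mul_eq_sum_norm_sq {m n : ℕ} {p q : ℂ[X]} (hp : p.natDegree ≤ m)
    (hq : q.natDegree ≤ n) (hco : IsCoprime p q) (hlead : p.coeff m ≠ 0 ∨ q.coeff n ≠ 0)
    (z : ℂ) :
    ∃ a b : ℂ[X], a.natDegree ≤ m ∧ b.natDegree ≤ n ∧
      √(coeffNorm2 m n a b) ≤
        specNorm (pinv (sylv m n p q)) * √(∑ j ∈ range (m + n + 1), (‖z‖ ^ j) ^ 2) ∧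
      (q * a - p * b).eval z = ((∑ j ∈ range (m + n + 1), (‖z‖ ^ j) ^ 2 : ℝ) : ℂ) := by
  set S := sylv m n p q
  set w : Fin (m + n + 1) → ℂ := fun j => star z ^ (j : ℕ)
  obtain ⟨a, b, ha, hb, hx⟩ := exists_coeffVec_eq m n (pinv S *ᵥ w)
  have hSx : S *ᵥ coeffVec m n a b = w := by
    rw [hx, Matrix.mulVec_mulVec,
      mul_pinv_of_surjective S (sylv_mulVec_surjective hp hq hco hlead), Matrix.one_mulVec]
  have hdeg : (q * a - p * b).natDegree < m + n + 1 := by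
    refine (natDegree_sub_le _ _).trans_lt (Nat.lt_succ_of_le (max_le ?_ ?_)) <;>
      exact natDegree_mul_le.trans (by omega)
  refine ⟨a, b, ha, hb, ?_, eval_eq_sum_norm_sq_of_coeff_eq_star_pow hdeg fun j hj => ?_⟩
  · have hw : ∑ j, ‖w j‖ ^ 2 = ∑ j ∈ range (m + n + 1), (‖z‖ ^ j) ^ 2 := by
      simp only [w, norm_pow, norm_star]
      exact Fin.sum_univ_eq_sum_range (fun j => (‖z‖ ^ j) ^ 2) _
    rw [← sum_norm_sq_coeffVec, ← hw, hx]
    exact sqrt_sum_norm_sq_mulVec_le _ _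
  · rw [← sylv_mulVec_coeffVec m n p q ha hb ⟨j, hj⟩, hSx]

theorem one_le_norm_eval_mul_specNorm_pinv_sylv {m n : ℕ} {p q : ℂ[X]} (hp : p.natDegree ≤ m)
    (hq : q.natDegree ≤ n) (hco : IsCoprime p q) (hlead : p.coeff m ≠ 0 ∨ q.coeff n ≠ 0)
    {z : ℂ} (hpole : q.eval z = 0) :
    1 ≤ ‖p.eval z‖ * specNorm (pinv (sylv m n p q)) := by
  set τ := specNorm (pinv (sylv m n p q))
  set T := ∑ j ∈ range (m + n + 1), (‖z‖ ^ j) ^ 2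
  have hT : 1 ≤ T := by
    simpa [T] using Finset.single_le_sum (f := fun j => (‖z‖ ^ j) ^ 2) (fun _ _ => sq_nonneg _)
      (Finset.mem_range.2 (Nat.succ_pos (m + n)))
  obtain ⟨a, b, -, hb, hab, heval⟩ :=
    exists_eval_mul_sub_mul_eq_sum_norm_sq hp hq hco hlead z
  rw [eval_sub, eval_mul, eval_mul, hpole, zero_mul, zero_sub] at heval
  have hbz : ‖b.eval z‖ ≤ τ * T :=
    calc ‖b.eval z‖ ≤ √T * √(coeffNorm2 m n a b) := by
          refine (norm_eval_le_of_natDegree_lt (Nat.lt_succ_of_le hb) z).trans ?_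
          gcongr
          · exact Finset.sum_le_sum_of_subset_of_nonneg (Finset.range_subset_range.2 (by omega))
              fun _ _ _ => by positivity
          · rw [coeffNorm2]
            exact le_add_of_nonneg_left (by positivity)
      _ ≤ √T * (τ * √T) := by gcongr
      _ = τ * T := by rw [mul_left_comm, Real.mul_self_sqrt (by positivity)]
  have : T ≤ ‖p.eval z‖ * τ * T :=
    calc T = ‖p.eval z‖ * ‖b.eval z‖ := by
          rw [← norm_mul, ← norm_neg, heval, Complex.norm_real, Real.norm_of_nonneg (by positivity)]
      _ ≤ ‖p.eval z‖ * (τ * T) := by gcongr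
      _ = _ := by ring
  nlinarith

theorem one_le_sqrt_two_mul_specNorm_sylv {m n : ℕ} {p q : ℂ[X]}
    (hnorm : coeffNorm2 m n p q = 1) : 1 ≤ √2 * specNorm (sylv m n p q) := by
  have hcol (k : Fin (m + n + 2)) (hk : 1 / 2 ≤ ∑ j, ‖sylv m n p q j k‖ ^ 2) :
      1 ≤ √2 * specNorm (sylv m n p q) :=
    calc (1 : ℝ) = √2 * √(1 / 2) := by rw [← Real.sqrt_mul zero_le_two]; norm_num
      _ ≤ √2 * specNorm (sylv m n p q) := by
        gcongr
        exact (Real.sqrt_le_sqrt hk).trans (sqrt_sum_norm_sq_col_le _ k)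
  have hsub (f : ℕ → ℂ) {N : ℕ} (hN : N ≤ m + n + 1) :
      ∑ j ∈ range N, ‖f j‖ ^ 2 ≤ ∑ j : Fin (m + n + 1), ‖f j‖ ^ 2 := by
    rw [Fin.sum_univ_eq_sum_range (fun j => ‖f j‖ ^ 2)]
    exact Finset.sum_le_sum_of_subset_of_nonneg (Finset.range_subset_range.2 hN)
      fun _ _ _ => by positivity
  rw [coeffNorm2] at hnorm
  rcases le_total (1 / 2) (∑ j ∈ range (m + 1), ‖p.coeff j‖ ^ 2) with hP | hP
  · refine hcol ⟨m + 1, by omega⟩ (hP.trans ((hsub p.coeff (by omega)).trans_eq ?_))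
    simp [sylv]
  · refine hcol ⟨0, by omega⟩ ((by linarith : (1 : ℝ) / 2 ≤ _).trans
      ((hsub q.coeff (by omega : n + 1 ≤ m + n + 1)).trans_eq ?_))
    simp [sylv]

theorem residue_lower_bound_general (m n : ℕ) (p q : Polynomial ℂ)
    (hp : p.natDegree ≤ m) (hq : q.natDegree ≤ n)
    (hco : IsCoprime p q) (hlead : p.coeff m ≠ 0 ∨ q.coeff n ≠ 0)
    (hnorm : coeffNorm2 m n p q = 1)
    (z₀ : ℂ) (hz₀ : ‖z₀‖ ≤ 1)
    (hpole : q.eval z₀ = 0) (hsimple : q.derivative.eval z₀ ≠ 0) :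
    ‖p.eval z₀ / q.derivative.eval z₀‖ ≥
      1 / (Real.sqrt 2 * (m + n + 1 : ℝ) ^ ((3 : ℝ) / 2) * condS m n p q) := by
  set σ := specNorm (sylv m n p q)
  set τ := specNorm (pinv (sylv m n p q))
  set E := (m + n + 1 : ℝ) ^ ((3 : ℝ) / 2)
  have hpτ : 1 ≤ ‖p.eval z₀‖ * τ := one_le_norm_eval_mul_specNorm_pinv_sylv hp hq hco hlead hpole
  have hσ : 1 ≤ √2 * σ := one_le_sqrt_two_mul_specNorm_sylv hnorm
  have hderiv : ‖q.derivative.eval z₀‖ ≤ E := by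
    have hQ : ∑ j ∈ range (n + 1), ‖q.coeff j‖ ^ 2 ≤ 1 := by
      rw [coeffNorm2] at hnorm
      linarith [Finset.sum_nonneg fun j (_ : j ∈ range (m + 1)) => sq_nonneg ‖p.coeff j‖]
    refine (norm_derivative_eval_le_s12 hq hQ hz₀).trans
      (Real.rpow_le_rpow (by positivity) ?_ (by norm_num))
    linarith [(m.cast_nonneg : (0 : ℝ) ≤ m)]
  have hβ : 0 < ‖q.derivative.eval z₀‖ := norm_pos_iff.2 hsimple
  have hD : 0 < √2 * E * (σ * τ) := by
    have hσ₀ : 0 < σ := pos_of_mul_pos_right (one_pos.trans_le hσ) (by positivity)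
    have hτ₀ : 0 < τ := pos_of_mul_pos_right (one_pos.trans_le hpτ) (norm_nonneg _)
    positivity
  rw [ge_iff_le, norm_div, condS, div_le_div_iff₀ hD hβ, one_mul]
  calc ‖q.derivative.eval z₀‖ ≤ E := hderiv
    _ ≤ E * ((√2 * σ) * (‖p.eval z₀‖ * τ)) :=
        le_mul_of_one_le_right (by positivity) (one_le_mul_of_one_le_of_one_le hσ hpτ)
    _ = ‖p.eval z₀‖ * (√2 * E * (σ * τ)) := by ring

/-- for a nondegenerate normalized `r = p/q ∈ R_{m,n}` with a simple pole
`z₀` in the closed unit disk, the residue `α₀ = p(z₀)/q'(z₀)` satisfies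
`|α₀| ≥ 1/(√2 (m+n+1)^{3/2} κ(S))`. -/
theorem residue_lower_bound (m n : ℕ) (p q : Polynomial ℂ)
    (hp : p.natDegree ≤ m) (hq : q.natDegree ≤ n)
    (hco : IsCoprime p q) (hlead : p.coeff m ≠ 0 ∨ q.coeff n ≠ 0)
    (hnorm : coeffNorm2 m n p q = 1)
    (z₀ : ℂ) (hz₀ : ‖z₀‖ ≤ 1)
    (hpole : q.eval z₀ = 0) (hsimple : q.derivative.eval z₀ ≠ 0) (hnum : p.eval z₀ ≠ 0) :
    ‖p.eval z₀ / q.derivative.eval z₀‖ ≥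
      1 / (Real.sqrt 2 * (m + n + 1 : ℝ) ^ ((3 : ℝ) / 2) * condS m n p q) :=
  residue_lower_bound_general m n p q hp hq hco hlead hnorm z₀ hz₀ hpole hsimple
end
end

section
/- Let p of degree ≤ m and q of degree ≤ n have coefficient vectors with ‖vec(p)‖ ≤ 1 and ‖vec(q)‖ ≤ 1. Suppose σ, τ are in the closed unit disk with p(σ) = 0 and q(τ) = 0. Then |p(τ)| ≤ m|τ-σ|·√(1+|τ|²+...+|τ|^{2m}), and consequently the numerical GCD distance ε(p,q) := inf_{z∈ℂ̄} √( |p(z)|²/(1+|z|²+...+|z|^{2m}) + |q(z)|²/(1+|z|²+...+|z|^{2n}) ) satisfies ε(p,q) ≤ min{m,n}·|σ-τ|. -/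
noncomputable section
open Matrix Finset Polynomial

/-- Main estimate: `|p(τ)| = |p(τ) - p(σ)| ≤ m |τ-σ| √(∑ |τ|^{2i})`. -/
lemma froissart_key (m : ℕ) (p : Polynomial ℂ) (hp : p.natDegree ≤ m)
    (hpn : ∑ j ∈ Finset.range (m + 1), ‖p.coeff j‖ ^ 2 ≤ 1)
    (σ τ : ℂ) (hσ : ‖σ‖ ≤ 1) (_hτ : ‖τ‖ ≤ 1)
    (hpσ : p.eval σ = 0) :
    ‖p.eval τ‖ ≤
      m * ‖τ - σ‖ *
        Real.sqrt (∑ i ∈ Finset.range (m + 1), ‖τ‖ ^ (2 * i)) := by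
  set t : ℝ := ‖τ‖ with ht
  set S : ℝ := ∑ i ∈ Finset.range (m + 1), t ^ (2 * i) with hS
  have htnn : 0 ≤ t := norm_nonneg τ
  have hSterms : ∀ i ∈ Finset.range (m + 1), 0 ≤ t ^ (2 * i) := fun i _ => pow_nonneg htnn _
  have hS1 : (1 : ℝ) ≤ S := by
    have := Finset.single_le_sum hSterms (Finset.mem_range.2 (Nat.succ_pos m))
    simpa using this
  have hS0 : 0 < S := lt_of_lt_of_le one_pos hS1
  -- expand p(τ) as a sum of differences
  have hlt : p.natDegree < m + 1 := Nat.lt_succ_of_le hp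
  have hdiff : p.eval τ = ∑ k ∈ Finset.range (m + 1), p.coeff k * (τ ^ k - σ ^ k) := by
    have h1 := Polynomial.eval_eq_sum_range' hlt τ
    have h2 := Polynomial.eval_eq_sum_range' hlt σ
    rw [show p.eval τ = p.eval τ - p.eval σ by rw [hpσ, sub_zero], h1, h2,
      ← Finset.sum_sub_distrib]
    exact Finset.sum_congr rfl fun k _ => by ring
  -- geometric factor bound
  set b : ℕ → ℝ := fun k => ∑ i ∈ Finset.range k, t ^ i with hb
  have hbnn : ∀ k, 0 ≤ b k := fun k => Finset.sum_nonneg fun i _ => pow_nonneg htnn _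
  have hstep : ∀ k, ‖τ ^ k - σ ^ k‖ ≤ ‖τ - σ‖ * b k := by
    intro k
    rw [← geom_sum₂_mul τ σ k, norm_mul, mul_comm]
    refine mul_le_mul_of_nonneg_left ?_ (norm_nonneg _)
    calc ‖∑ i ∈ Finset.range k, τ ^ i * σ ^ (k - 1 - i)‖
        ≤ ∑ i ∈ Finset.range k, ‖τ ^ i * σ ^ (k - 1 - i)‖ :=
          norm_sum_le _ _
      _ ≤ b k := by
          refine Finset.sum_le_sum fun i _ => ?_
          rw [norm_mul, norm_pow, norm_pow]
          calc t ^ i * ‖σ‖ ^ (k - 1 - i) ≤ t ^ i * 1 :=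
                mul_le_mul_of_nonneg_left (pow_le_one₀ (norm_nonneg σ) hσ)
                  (pow_nonneg htnn i)
            _ = t ^ i := mul_one _
  -- triangle inequality
  have htri : ‖p.eval τ‖ ≤
      ‖τ - σ‖ * ∑ k ∈ Finset.range (m + 1), ‖p.coeff k‖ * b k := by
    rw [hdiff, Finset.mul_sum]
    calc ‖∑ k ∈ Finset.range (m + 1), p.coeff k * (τ ^ k - σ ^ k)‖
        ≤ ∑ k ∈ Finset.range (m + 1), ‖p.coeff k * (τ ^ k - σ ^ k)‖ :=
          norm_sum_le _ _
      _ ≤ ∑ k ∈ Finset.range (m + 1), ‖τ - σ‖ * (‖p.coeff k‖ * b k) := by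
          refine Finset.sum_le_sum fun k _ => ?_
          rw [norm_mul]
          calc ‖p.coeff k‖ * ‖τ ^ k - σ ^ k‖
              ≤ ‖p.coeff k‖ * (‖τ - σ‖ * b k) :=
                mul_le_mul_of_nonneg_left (hstep k) (norm_nonneg _)
            _ = ‖τ - σ‖ * (‖p.coeff k‖ * b k) := by ring
  -- bound on b k squared (Cauchy–Schwarz)
  have hbk : ∀ k, k ≤ m + 1 → (b k) ^ 2 ≤ k * S := by
    intro k hk
    have hcs := Finset.sum_mul_sq_le_sq_mul_sq (Finset.range k) (fun _ => (1 : ℝ))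
      (fun i => t ^ i)
    simp only [one_mul, one_pow, Finset.sum_const, Finset.card_range, nsmul_eq_mul, mul_one]
      at hcs
    calc (b k) ^ 2 ≤ (k : ℝ) * ∑ i ∈ Finset.range k, (t ^ i) ^ 2 := hcs
      _ ≤ (k : ℝ) * S := by
          refine mul_le_mul_of_nonneg_left ?_ (Nat.cast_nonneg k)
          calc ∑ i ∈ Finset.range k, (t ^ i) ^ 2 = ∑ i ∈ Finset.range k, t ^ (2 * i) := by
                refine Finset.sum_congr rfl fun i _ => ?_
                rw [← pow_mul, mul_comm]
            _ ≤ S := Finset.sum_le_sum_of_subset_of_nonneg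
                (Finset.range_subset_range.2 hk) (fun i hi _ => pow_nonneg htnn _)
  -- total bound on sum of b k squared
  have hbsum : ∑ k ∈ Finset.range (m + 1), (b k) ^ 2 ≤ (m : ℝ) ^ 2 * S := by
    rw [Finset.sum_range_succ']
    have hb0 : b 0 = 0 := by simp [hb]
    rw [hb0]
    have : ∑ k ∈ Finset.range m, (b (k + 1)) ^ 2 ≤ ∑ k ∈ Finset.range m, (m : ℝ) * S := by
      refine Finset.sum_le_sum fun k hk => ?_
      have hk' : k + 1 ≤ m + 1 := Nat.succ_le_succ (Nat.le_of_lt (Finset.mem_range.1 hk))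
      calc (b (k + 1)) ^ 2 ≤ (k + 1 : ℕ) * S := hbk _ hk'
        _ ≤ (m : ℝ) * S := by
            refine mul_le_mul_of_nonneg_right ?_ (le_of_lt hS0)
            exact_mod_cast Nat.succ_le_of_lt (Finset.mem_range.1 hk)
    calc ∑ k ∈ Finset.range m, (b (k + 1)) ^ 2 + 0 ^ 2
        = ∑ k ∈ Finset.range m, (b (k + 1)) ^ 2 := by norm_num
      _ ≤ ∑ k ∈ Finset.range m, (m : ℝ) * S := this
      _ = (m : ℝ) ^ 2 * S := by
          rw [Finset.sum_const, Finset.card_range, nsmul_eq_mul]; ring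
  -- Cauchy–Schwarz on the coefficient sum
  have hcs2 : ∑ k ∈ Finset.range (m + 1), ‖p.coeff k‖ * b k ≤
      (m : ℝ) * Real.sqrt S := by
    have h := Finset.sum_mul_sq_le_sq_mul_sq (Finset.range (m + 1))
      (fun k => ‖p.coeff k‖) b
    have habnn : 0 ≤ ∑ k ∈ Finset.range (m + 1), ‖p.coeff k‖ * b k :=
      Finset.sum_nonneg fun k _ => mul_nonneg (norm_nonneg _) (hbnn k)
    have hsq : (∑ k ∈ Finset.range (m + 1), ‖p.coeff k‖ * b k) ^ 2 ≤
        (m : ℝ) ^ 2 * S := by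
      calc (∑ k ∈ Finset.range (m + 1), ‖p.coeff k‖ * b k) ^ 2
          ≤ (∑ k ∈ Finset.range (m + 1), ‖p.coeff k‖ ^ 2) *
            ∑ k ∈ Finset.range (m + 1), (b k) ^ 2 := h
        _ ≤ 1 * ((m : ℝ) ^ 2 * S) := by
            refine mul_le_mul hpn hbsum (Finset.sum_nonneg fun k _ => sq_nonneg _) one_pos.le
        _ = (m : ℝ) ^ 2 * S := one_mul _
    have := Real.sqrt_le_sqrt hsq
    rwa [Real.sqrt_sq habnn, Real.sqrt_mul (sq_nonneg _), Real.sqrt_sq (Nat.cast_nonneg m)]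
      at this
  calc ‖p.eval τ‖
      ≤ ‖τ - σ‖ * ∑ k ∈ Finset.range (m + 1), ‖p.coeff k‖ * b k := htri
    _ ≤ ‖τ - σ‖ * ((m : ℝ) * Real.sqrt S) :=
        mul_le_mul_of_nonneg_left hcs2 (norm_nonneg _)
    _ = m * ‖τ - σ‖ * Real.sqrt S := by ring

lemma froissart_Spos (m : ℕ) (t : ℝ) (ht : 0 ≤ t) :
    0 < ∑ i ∈ Finset.range (m + 1), t ^ (2 * i) := by
  have h := Finset.single_le_sum (f := fun i => t ^ (2 * i))
    (fun i _ => pow_nonneg ht _) (Finset.mem_range.2 (Nat.succ_pos m))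
  simpa using lt_of_lt_of_le one_pos (by simpa using h)

/-- Value of the `ε(p,q)` integrand at a point `z` with `q(z) = 0`. -/
lemma froissart_pt (m n : ℕ) (p q : Polynomial ℂ) (z : ℂ) (c : ℝ) (hc : 0 ≤ c)
    (hqz : q.eval z = 0)
    (hpz : ‖p.eval z‖ ≤
      c * Real.sqrt (∑ i ∈ Finset.range (m + 1), ‖z‖ ^ (2 * i))) :
    Real.sqrt (‖p.eval z‖ ^ 2 / (∑ i ∈ Finset.range (m + 1), ‖z‖ ^ (2 * i))
      + ‖q.eval z‖ ^ 2 / (∑ i ∈ Finset.range (n + 1), ‖z‖ ^ (2 * i))) ≤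
    c := by
  set S : ℝ := ∑ i ∈ Finset.range (m + 1), ‖z‖ ^ (2 * i) with hS
  have hS0 : 0 < S := froissart_Spos m _ (norm_nonneg z)
  rw [hqz]
  simp only [norm_zero, zero_pow, zero_div, add_zero, two_ne_zero, ne_eq, OfNat.ofNat_ne_zero,
    not_false_eq_true]
  have hdiv : ‖p.eval z‖ ^ 2 / S ≤ c ^ 2 := by
    rw [div_le_iff₀ hS0]
    calc ‖p.eval z‖ ^ 2 ≤ (c * Real.sqrt S) ^ 2 :=
          pow_le_pow_left₀ (norm_nonneg _) hpz 2
      _ = c ^ 2 * S := by rw [mul_pow, Real.sq_sqrt hS0.le]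
  calc Real.sqrt (‖p.eval z‖ ^ 2 / S) ≤ Real.sqrt (c ^ 2) :=
        Real.sqrt_le_sqrt hdiv
    _ = c := Real.sqrt_sq hc

/-- if `‖vec p‖, ‖vec q‖ ≤ 1`, `σ, τ` lie in the closed unit disk, `p(σ) = 0`
and `q(τ) = 0`, then `|p(τ)| ≤ m |τ-σ| √(1+|τ|²+⋯+|τ|^{2m})`, and the numerical GCD
distance `ε(p,q)` satisfies `ε(p,q) ≤ min{m,n} |σ-τ|`. -/
theorem numerical_gcd_froissart (m n : ℕ) (p q : Polynomial ℂ)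
    (hp : p.natDegree ≤ m) (hq : q.natDegree ≤ n)
    (hpn : ∑ j ∈ Finset.range (m + 1), ‖p.coeff j‖ ^ 2 ≤ 1)
    (hqn : ∑ j ∈ Finset.range (n + 1), ‖q.coeff j‖ ^ 2 ≤ 1)
    (σ τ : ℂ) (hσ : ‖σ‖ ≤ 1) (hτ : ‖τ‖ ≤ 1)
    (hpσ : p.eval σ = 0) (hqτ : q.eval τ = 0) :
    ‖p.eval τ‖ ≤
      m * ‖τ - σ‖ *
        Real.sqrt (∑ i ∈ Finset.range (m + 1), ‖τ‖ ^ (2 * i)) ∧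
    sInf (Set.range fun z : ℂ =>
        Real.sqrt (‖p.eval z‖ ^ 2 / (∑ i ∈ Finset.range (m + 1), ‖z‖ ^ (2 * i))
          + ‖q.eval z‖ ^ 2 / (∑ i ∈ Finset.range (n + 1), ‖z‖ ^ (2 * i)))) ≤
      (min m n : ℝ) * ‖σ - τ‖ := by
  refine ⟨froissart_key m p hp hpn σ τ hσ hτ hpσ, ?_⟩
  set f : ℂ → ℝ := fun z =>
    Real.sqrt (‖p.eval z‖ ^ 2 / (∑ i ∈ Finset.range (m + 1), ‖z‖ ^ (2 * i))
      + ‖q.eval z‖ ^ 2 / (∑ i ∈ Finset.range (n + 1), ‖z‖ ^ (2 * i)))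
    with hf
  have hbdd : BddBelow (Set.range f) := by
    refine ⟨0, ?_⟩
    rintro x ⟨z, rfl⟩
    exact Real.sqrt_nonneg _
  have hA : 0 ≤ ‖σ - τ‖ := norm_nonneg _
  have h1 : f τ ≤ (m : ℝ) * ‖σ - τ‖ := by
    refine froissart_pt m n p q τ _ (mul_nonneg (Nat.cast_nonneg m) hA) hqτ ?_
    have := froissart_key m p hp hpn σ τ hσ hτ hpσ
    rwa [norm_sub_rev τ σ] at this
  have h2 : f σ ≤ (n : ℝ) * ‖σ - τ‖ := by
    have haux : Real.sqrt (‖q.eval σ‖ ^ 2 /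
        (∑ i ∈ Finset.range (n + 1), ‖σ‖ ^ (2 * i))
        + ‖p.eval σ‖ ^ 2 /
        (∑ i ∈ Finset.range (m + 1), ‖σ‖ ^ (2 * i))) ≤
        (n : ℝ) * ‖σ - τ‖ := by
      refine froissart_pt n m q p σ _ (mul_nonneg (Nat.cast_nonneg n) hA) hpσ ?_
      exact froissart_key n q hq hqn τ σ hτ hσ hqτ
    rw [hf]
    simpa [add_comm] using haux
  have hmin : sInf (Set.range f) ≤
      min ((m : ℝ) * ‖σ - τ‖) ((n : ℝ) * ‖σ - τ‖) :=
    le_min (le_trans (csInf_le hbdd ⟨τ, rfl⟩) h1) (le_trans (csInf_le hbdd ⟨σ, rfl⟩) h2)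
  calc sInf (Set.range f) ≤ _ := hmin
    _ = (min m n : ℝ) * ‖σ - τ‖ := by
        rw [min_mul_of_nonneg _ _ hA]
end
end

section
/- Let C̲ ∈ ℂ^{n×n} be invertible, c̲ ∈ ℂ^n, and C = [c̲ | C̲] ∈ ℂ^{n×(n+1)}. Then the smallest singular value of C satisfies σ_n(C) ≥ σ_n(C̲) = 1/‖C̲^{-1}‖. Moreover, if vec(q) = q(0)·(1, -C̲^{-1}c̲)^t and vec(q̃) = ẽ·C̲^{-1}e_n are normalized to unit norm (determining q(0) and ẽ), then the Cabay–Meleshko indicator κ_CM = 1/|q(0)·ẽ| satisfies κ_CM ≤ √n·‖C̲^{-1}‖². -/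
/-!
`C† y` is the least-norm solution of `C x = y`: it lies in the range of `Cᴴ`, which is orthogonal
to `ker C`. Since `(0, C̲⁻¹ y)` is another solution, `‖C† y‖ ≤ ‖C̲⁻¹ y‖`.

The normalizations give `κ_CM = √(1 + ‖C̲⁻¹ c̲‖²) · ‖C̲⁻¹ eₙ‖`. The second factor is at most
`‖C̲⁻¹‖`. For the first, `C̲⁻¹ C = [C̲⁻¹ c̲ | I]`, so bounding the Frobenius norm of a product
column by column gives `‖C̲⁻¹ c̲‖² + n ≤ ‖C̲⁻¹‖² ‖C‖_F² ≤ n ‖C̲⁻¹‖²`.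
-/

noncomputable section
open Matrix Finset Polynomial

/-- Euclidean norm of a complex vector. -/
def vnorm {k : ℕ} (v : Fin k → ℂ) : ℝ :=
  Real.sqrt (∑ i, ‖v i‖ ^ 2)

open scoped ComplexOrder

section Vnorm

variable {k l : ℕ}

lemma vnorm_eq_norm_toLp (v : Fin k → ℂ) : vnorm v = ‖WithLp.toLp 2 v‖ := by
  rw [EuclideanSpace.norm_eq]
  rfl

lemma vnorm_nonneg (v : Fin k → ℂ) : 0 ≤ vnorm v := Real.sqrt_nonneg _

lemma sq_vnorm (v : Fin k → ℂ) : vnorm v ^ 2 = ∑ i, ‖v i‖ ^ 2 :=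
  Real.sq_sqrt (by positivity)

lemma vnorm_smul (a : ℂ) (v : Fin k → ℂ) : vnorm (a • v) = ‖a‖ * vnorm v := by
  simp only [vnorm_eq_norm_toLp, WithLp.toLp_smul, norm_smul]

lemma vnorm_neg (v : Fin k → ℂ) : vnorm (-v) = vnorm v := by
  simp only [vnorm_eq_norm_toLp, WithLp.toLp_neg, norm_neg]

lemma vnorm_cons (a : ℂ) (v : Fin k → ℂ) :
    vnorm (Fin.cons a v : Fin (k + 1) → ℂ) = √(‖a‖ ^ 2 + vnorm v ^ 2) := by
  rw [vnorm, Fin.sum_univ_succ, sq_vnorm]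
  rfl

lemma vnorm_single (j : Fin k) : vnorm (Pi.single j 1) = 1 := by
  rw [vnorm_eq_norm_toLp, PiLp.toLp_single, PiLp.norm_single, norm_one]

lemma vnorm_mulVec_le (A : Matrix (Fin k) (Fin l) ℂ) (v : Fin l → ℂ) :
    vnorm (A *ᵥ v) ≤ specNorm A * vnorm v := by
  simp only [vnorm_eq_norm_toLp]
  exact (Matrix.toEuclideanLin A).toContinuousLinearMap.le_opNorm (WithLp.toLp 2 v)

lemma specNorm_nonneg (A : Matrix (Fin k) (Fin l) ℂ) : 0 ≤ specNorm A := norm_nonneg _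

lemma specNorm_le_of_vnorm_mulVec_le {A : Matrix (Fin k) (Fin l) ℂ} {K : ℝ} (hK : 0 ≤ K)
    (h : ∀ v, vnorm (A *ᵥ v) ≤ K * vnorm v) : specNorm A ≤ K :=
  ContinuousLinearMap.opNorm_le_bound _ hK fun v => by
    simp only [vnorm_eq_norm_toLp] at h
    exact h v.ofLp

/-- Cauchy–Schwarz; the hypothesis says `y - x ⟂ x`. -/
lemma vnorm_le_of_star_dotProduct_eq {x y : Fin k → ℂ} (h : star x ⬝ᵥ y = star x ⬝ᵥ x) :
    vnorm x ≤ vnorm y := by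
  simp only [vnorm_eq_norm_toLp]
  set X := WithLp.toLp 2 x
  have hXY : ‖X‖ ^ 2 ≤ ‖X‖ * ‖WithLp.toLp 2 y‖ := by
    have hinner : inner ℂ X (WithLp.toLp 2 y) = inner ℂ X X := by
      simp only [X, EuclideanSpace.inner_toLp_toLp, dotProduct_comm _ (star x), h]
    calc ‖X‖ ^ 2 = ‖inner ℂ X X‖ := by rw [inner_self_eq_norm_sq_to_K]; simp
      _ ≤ _ := hinner ▸ norm_inner_le_norm X _
  nlinarith [norm_nonneg X, norm_nonneg (WithLp.toLp 2 y)]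

end Vnorm

section Pinv

variable {m k : ℕ} {C : Matrix (Fin m) (Fin k) ℂ}

lemma isUnit_mul_conjTranspose_of_surjective_s19 (hC : Function.Surjective C.mulVec) :
    IsUnit (C * Cᴴ) := by
  refine PosDef.isUnit <| posDef_iff_dotProduct_mulVec.mpr
    ⟨isHermitian_mul_conjTranspose_self C, fun x hx => ?_⟩
  have hquad : star x ⬝ᵥ (C * Cᴴ) *ᵥ x = star (Cᴴ *ᵥ x) ⬝ᵥ Cᴴ *ᵥ x := by
    rw [star_mulVec, conjTranspose_conjTranspose, ← dotProduct_mulVec, mulVec_mulVec]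
  rw [hquad, dotProduct_star_self_pos_iff]
  intro hker
  obtain ⟨z, rfl⟩ := hC x
  have hself : star (C *ᵥ z) ⬝ᵥ C *ᵥ z = 0 := by
    rw [dotProduct_mulVec, ← conjTranspose_conjTranspose C, ← star_mulVec,
      conjTranspose_conjTranspose, hker, star_zero, zero_dotProduct]
  exact hx (dotProduct_star_self_eq_zero.mp hself)

lemma mul_pinv (h : IsUnit (C * Cᴴ)) : C * pinv C = 1 := by
  rw [pinv, ← Matrix.mul_assoc, mul_nonsing_inv _ ((isUnit_iff_isUnit_det _).mp h)]

lemma vnorm_pinv_mulVec_mulVec_le (h : IsUnit (C * Cᴴ)) (x : Fin k → ℂ) :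
    vnorm (pinv C *ᵥ C *ᵥ x) ≤ vnorm x := by
  set u := (C * Cᴴ)⁻¹ *ᵥ C *ᵥ x
  have hrange : ∀ w, star (pinv C *ᵥ C *ᵥ x) ⬝ᵥ w = star u ⬝ᵥ C *ᵥ w := fun w => by
    rw [pinv, ← mulVec_mulVec, star_mulVec, conjTranspose_conjTranspose, ← dotProduct_mulVec]
  apply vnorm_le_of_star_dotProduct_eq
  rw [hrange, hrange, mulVec_mulVec, mul_pinv h, one_mulVec]

end Pinv

section ColCons

variable {m k l : ℕ}

/-- The paper's `[c | A]`. -/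
def colCons (c : Fin m → ℂ) (A : Matrix (Fin m) (Fin k) ℂ) : Matrix (Fin m) (Fin (k + 1)) ℂ :=
  fun i => Fin.cons (c i) (A i)

def frobSq (A : Matrix (Fin m) (Fin k) ℂ) : ℝ :=
  ∑ i, ∑ j, ‖A i j‖ ^ 2

lemma colCons_mulVec_cons_zero (c : Fin m → ℂ) (A : Matrix (Fin m) (Fin k) ℂ) (x : Fin k → ℂ) :
    colCons c A *ᵥ Fin.cons 0 x = A *ᵥ x := by
  ext i
  simp [colCons, mulVec, dotProduct, Fin.sum_univ_succ]

lemma mul_colCons (B : Matrix (Fin l) (Fin m) ℂ) (c : Fin m → ℂ) (A : Matrix (Fin m) (Fin k) ℂ) :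
    B * colCons c A = colCons (B *ᵥ c) (B * A) := by
  ext i j
  cases j using Fin.cases <;> rfl

lemma frobSq_colCons (c : Fin m → ℂ) (A : Matrix (Fin m) (Fin k) ℂ) :
    frobSq (colCons c A) = vnorm c ^ 2 + frobSq A := by
  simp only [frobSq, colCons, Fin.sum_univ_succ, Fin.cons_zero, Fin.cons_succ, sum_add_distrib,
    sq_vnorm]

lemma frobSq_one : frobSq (1 : Matrix (Fin m) (Fin m) ℂ) = m := by
  simp [frobSq, one_apply, apply_ite]

lemma frobSq_mul_le (A : Matrix (Fin l) (Fin m) ℂ) (B : Matrix (Fin m) (Fin k) ℂ) :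
    frobSq (A * B) ≤ specNorm A ^ 2 * frobSq B := by
  have hcol : ∀ j, ∑ i, ‖(A * B) i j‖ ^ 2 ≤ specNorm A ^ 2 * ∑ i, ‖B i j‖ ^ 2 := fun j => by
    have h := pow_le_pow_left₀ (vnorm_nonneg _) (vnorm_mulVec_le A fun i => B i j) 2
    rw [mul_pow, sq_vnorm, sq_vnorm] at h
    exact h
  rw [frobSq, frobSq, sum_comm, sum_comm (f := fun i j => ‖B i j‖ ^ 2), mul_sum]
  exact sum_le_sum fun j _ => hcol j

end ColCons

section Augmented

variable {m : ℕ} {A : Matrix (Fin m) (Fin m) ℂ}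

lemma specNorm_pinv_colCons_le (hA : IsUnit A) (c : Fin m → ℂ) :
    specNorm (pinv (colCons c A)) ≤ specNorm A⁻¹ := by
  have hsol : ∀ y, colCons c A *ᵥ Fin.cons 0 (A⁻¹ *ᵥ y) = y := fun y => by
    rw [colCons_mulVec_cons_zero, mulVec_mulVec,
      mul_nonsing_inv _ ((isUnit_iff_isUnit_det _).mp hA), one_mulVec]
  have hunit := isUnit_mul_conjTranspose_of_surjective_s19 fun y => ⟨_, hsol y⟩
  refine specNorm_le_of_vnorm_mulVec_le (specNorm_nonneg _) fun y => ?_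
  calc vnorm (pinv (colCons c A) *ᵥ y)
      = vnorm (pinv (colCons c A) *ᵥ colCons c A *ᵥ Fin.cons 0 (A⁻¹ *ᵥ y)) := by rw [hsol]
    _ ≤ vnorm (Fin.cons 0 (A⁻¹ *ᵥ y) : Fin (m + 1) → ℂ) := vnorm_pinv_mulVec_mulVec_le hunit _
    _ = vnorm (A⁻¹ *ᵥ y) := by rw [vnorm_cons, norm_zero, sq, zero_mul, zero_add,
        Real.sqrt_sq (vnorm_nonneg _)]
    _ ≤ specNorm A⁻¹ * vnorm y := vnorm_mulVec_le _ _

lemma sq_vnorm_inv_mulVec_add_le (hA : IsUnit A) (c : Fin m → ℂ) :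
    vnorm (A⁻¹ *ᵥ c) ^ 2 + m ≤ specNorm A⁻¹ ^ 2 * frobSq (colCons c A) := by
  calc vnorm (A⁻¹ *ᵥ c) ^ 2 + m = frobSq (A⁻¹ * colCons c A) := by
        rw [mul_colCons, nonsing_inv_mul _ ((isUnit_iff_isUnit_det _).mp hA), frobSq_colCons,
          frobSq_one]
    _ ≤ _ := frobSq_mul_le _ _

end Augmented

/-- with `C = [c̲ | C̲]`, `C̲` invertible, one has `σ(C) ≥ σ(C̲)`
(equivalently `‖C†‖ ≤ ‖C̲⁻¹‖`), and with the normalizations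
`‖q(0)·(1, -C̲⁻¹c̲)ᵗ‖ = 1`, `‖ẽ·C̲⁻¹ e_n‖ = 1` and `‖C‖_F ≤ √n`, the Cabay–Meleshko
indicator satisfies `κ_CM = 1/|q(0) ẽ| ≤ √n ‖C̲⁻¹‖²`. (Here the size is `n+1`.) -/
theorem cabay_meleshko (n : ℕ) (Cu : Matrix (Fin (n + 1)) (Fin (n + 1)) ℂ)
    (c : Fin (n + 1) → ℂ) (hCu : IsUnit Cu)
    (q0 et : ℂ)
    (hq0 : vnorm (q0 • ((Fin.cons 1 (fun i => -((Cu⁻¹ *ᵥ c) i))) : Fin (n + 2) → ℂ)) = 1)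
    (het : vnorm (et • (Cu⁻¹ *ᵥ Pi.single (Fin.last n) 1)) = 1)
    (hFrob : (∑ i, ∑ k, ‖(fun i => Fin.cons (c i) (Cu i) :
        Matrix (Fin (n + 1)) (Fin (n + 2)) ℂ) i k‖ ^ 2) ≤ (n + 1 : ℝ)) :
    specNorm (pinv (fun i => Fin.cons (c i) (Cu i) : Matrix (Fin (n + 1)) (Fin (n + 2)) ℂ)) ≤
        specNorm Cu⁻¹ ∧
      1 / ‖q0 * et‖ ≤ Real.sqrt (n + 1) * specNorm Cu⁻¹ ^ 2 := by
  refine ⟨specNorm_pinv_colCons_le hCu c, ?_⟩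
  have hS := sq_vnorm_inv_mulVec_add_le hCu c
  have hF : frobSq (colCons c Cu) ≤ n + 1 := hFrob
  set M := specNorm Cu⁻¹
  set S := vnorm (Cu⁻¹ *ᵥ c)
  set N := vnorm (Cu⁻¹ *ᵥ Pi.single (Fin.last n) 1)
  have hM : 0 ≤ M := specNorm_nonneg _
  have hq : ‖q0‖ * √(1 + S ^ 2) = 1 := by
    rwa [vnorm_smul, vnorm_cons, norm_one, one_pow, show (fun i => -((Cu⁻¹ *ᵥ c) i)) =
      -(Cu⁻¹ *ᵥ c) from rfl, vnorm_neg] at hq0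
  have he : ‖et‖ * N = 1 := by rwa [vnorm_smul] at het
  have hκ : 1 / ‖q0 * et‖ = √(1 + S ^ 2) * N := by
    rw [norm_mul]
    exact (eq_one_div_of_mul_eq_one_right (by linear_combination ‖et‖ * N * hq + he)).symm
  have hNM : N ≤ M := by
    simpa only [vnorm_single, mul_one] using vnorm_mulVec_le Cu⁻¹ (Pi.single (Fin.last n) 1)
  have hSM : √(1 + S ^ 2) ≤ √(n + 1) * M := by
    rw [← Real.sqrt_sq hM, ← Real.sqrt_mul (by positivity), mul_comm]
    push_cast at hS
    exact Real.sqrt_le_sqrt (by nlinarith [sq_nonneg M])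
  calc 1 / ‖q0 * et‖ = √(1 + S ^ 2) * N := hκ
    _ ≤ √(n + 1) * M * M := mul_le_mul hSM hNM (vnorm_nonneg _) (by positivity)
    _ = √(n + 1) * M ^ 2 := by ring
end
end
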